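/- arXiv:1904.12159 — 10 statements merged into one kernel-verified Lean document; each statement's English description precedes it below -/
import Mathlib

section
/- (1/n) Σ_{i=1}^{n} Tᵢ/p̂ₙ(Xᵢ) → 1 in probability as n → ∞; i.e., for every ε > 0, P( |(1/n) Σ_{i=1}^{n} Tᵢ/p̂ₙ(Xᵢ) − 1| > ε ) → 0. -/
/-!
With the true propensity score the weights `Tᵢ / p(Xᵢ)` are i.i.d., bounded by `1/δ`, and have
mean `E[E[T | X] / p(X)] = 1`, so their averages tend to `1` by the strong law. Once
`‖p̂ₙ - p‖_∞ ≤ η ≤ δ/2`, each weight moves by at most `|p̂ₙ - p| / (p̂ₙ p) ≤ 2η/δ²`, so the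
averages with `p̂ₙ` stay close to those with `p` outside an event of vanishing probability.
-/

open MeasureTheory ProbabilityTheory Filter Topology Finset

theorem abs_inv_sub_inv_le {δ η p q : ℝ} (hδ : 0 < δ) (hp : δ ≤ p) (hpq : |q - p| ≤ η)
    (hη : η ≤ δ / 2) : |q⁻¹ - p⁻¹| ≤ 2 * η / δ ^ 2 := by
  have hq : δ / 2 ≤ q := by linarith [(abs_sub_le_iff.mp hpq).2]
  have hq0 : 0 < q := by linarith
  have hp0 : 0 < p := by linarith
  calc |q⁻¹ - p⁻¹| = |q - p| / (q * p) := by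
        rw [inv_sub_inv hq0.ne' hp0.ne', abs_div, abs_sub_comm, abs_of_pos (mul_pos hq0 hp0)]
    _ ≤ η / (δ / 2 * δ) :=
        div_le_div₀ ((abs_nonneg _).trans hpq) hpq (by positivity)
          (mul_le_mul hq hp hδ.le hq0.le)
    _ = 2 * η / δ ^ 2 := by field_simp

theorem abs_sum_div_sub_sum_div_le {a b : ℕ → ℝ} {c : ℝ} (hc : 0 ≤ c)
    (h : ∀ i, |a i - b i| ≤ c) (n : ℕ) :
    |(∑ i ∈ range n, a i) / n - (∑ i ∈ range n, b i) / n| ≤ c := by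
  rcases Nat.eq_zero_or_pos n with rfl | hn
  · simpa using hc
  have hsum : |∑ i ∈ range n, (a i - b i)| ≤ n * c :=
    (abs_sum_le_sum_abs _ _).trans <| by
      simpa using Finset.sum_le_card_nsmul (range n) _ c fun i _ => h i
  rw [← sub_div, ← sum_sub_distrib, abs_div, Nat.abs_cast, div_le_iff₀ (by positivity)]
  linarith

theorem abs_avg_div_sub_avg_div_le {𝒳 : Type*} [TopologicalSpace 𝒳] [CompactSpace 𝒳]
    {δ η : ℝ} (hδ : 0 < δ) (hη : η ≤ δ / 2) (p q : C(𝒳, ℝ)) (hp : ∀ x, δ ≤ p x)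
    (hqp : ⨆ x, |q x - p x| ≤ η) {t : ℕ → ℝ} (ht : ∀ i, |t i| ≤ 1) (x : ℕ → 𝒳) (n : ℕ) :
    |(∑ i ∈ range n, t i / q (x i)) / n - (∑ i ∈ range n, t i / p (x i)) / n|
      ≤ 2 * η / δ ^ 2 := by
  have hbdd : BddAbove (Set.range fun x => |q x - p x|) :=
    (isCompact_range (q.continuous.sub p.continuous).abs).bddAbove
  have hη0 : 0 ≤ η := (Real.iSup_nonneg fun _ => abs_nonneg _).trans hqp
  refine abs_sum_div_sub_sum_div_le (by positivity) (fun i => ?_) n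
  calc |t i / q (x i) - t i / p (x i)| = |t i| * |(q (x i))⁻¹ - (p (x i))⁻¹| := by
        rw [← abs_mul, mul_sub, div_eq_mul_inv, div_eq_mul_inv]
    _ ≤ 1 * (2 * η / δ ^ 2) :=
        mul_le_mul (ht i) (abs_inv_sub_inv_le hδ (hp _) ((le_ciSup hbdd _).trans hqp) hη)
          (abs_nonneg _) zero_le_one
    _ = 2 * η / δ ^ 2 := one_mul _

section

variable {Ω : Type*} [MeasurableSpace Ω] {μ : Measure Ω}

theorem weak_law_real [IsProbabilityMeasure μ] {W : ℕ → Ω → ℝ} (hint : Integrable (W 0) μ)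
    (hindep : Pairwise (Function.onFun (IndepFun · · μ) W))
    (hident : ∀ i, IdentDistrib (W i) (W 0) μ μ) :
    TendstoInMeasure μ (fun n ω => (∑ i ∈ range n, W i ω) / n) atTop (fun _ => μ[W 0]) :=
  tendstoInMeasure_of_tendsto_ae
    (fun _ => ((Finset.aemeasurable_fun_sum _ fun i _ =>
      (hident i).aemeasurable_fst).div_const _).aestronglyMeasurable)
    (strong_law_ae_real W hint hindep hident)

theorem integral_div_eq_one_of_condExp_eq [IsProbabilityMeasure μ]
    {𝒳 : Type*} [MeasurableSpace 𝒳] {X : Ω → 𝒳} (hX : Measurable X) {q : 𝒳 → ℝ}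
    (hq : Measurable q) (hq0 : ∀ x, q x ≠ 0) {T : Ω → ℝ} (hT : Integrable T μ)
    (hTq : Integrable (fun ω => T ω / q (X ω)) μ)
    (hcond : (fun ω => q (X ω)) =ᵐ[μ] μ[T | MeasurableSpace.comap X inferInstance]) :
    ∫ ω, T ω / q (X ω) ∂μ = 1 := by
  set m := MeasurableSpace.comap X inferInstance
  have hqX_inv : StronglyMeasurable[m] (fun ω => (q (X ω))⁻¹) :=
    (hq.comp (Measurable.of_comap_le le_rfl)).inv.stronglyMeasurable
  have hTq' : Integrable ((fun ω => (q (X ω))⁻¹) * T) μ := by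
    convert hTq using 1
    ext ω
    exact (div_eq_inv_mul _ _).symm
  calc ∫ ω, T ω / q (X ω) ∂μ = ∫ ω, μ[(fun ω => (q (X ω))⁻¹) * T | m] ω ∂μ := by
        rw [integral_condExp hX.comap_le]
        simp only [Pi.mul_apply, div_eq_inv_mul]
    _ = ∫ ω, (q (X ω))⁻¹ * μ[T | m] ω ∂μ :=
        integral_congr_ae (condExp_mul_of_stronglyMeasurable_left hqX_inv hTq' hT)
    _ = ∫ _, (1 : ℝ) ∂μ := integral_congr_ae <| by
        filter_upwards [hcond] with ω hω
        rw [← hω, inv_mul_cancel₀ (hq0 _)]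
    _ = 1 := by simp

theorem tendsto_measure_abs_sub_gt_of_close {A S : ℕ → Ω → ℝ} {B : ℕ → Set Ω} {c ε : ℝ}
    (hε : 0 < ε) (hS : TendstoInMeasure μ S atTop (fun _ => c))
    (hB : Tendsto (fun n => μ (B n)) atTop (𝓝 0))
    (hAS : ∀ n, ∀ ω ∉ B n, |A n ω - S n ω| ≤ ε / 2) :
    Tendsto (fun n => μ {ω | |A n ω - c| > ε}) atTop (𝓝 0) := by
  have hincl : ∀ n, {ω | |A n ω - c| > ε} ⊆ {ω | ε / 2 ≤ dist (S n ω) c} ∪ B n := by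
    intro n ω hω
    by_contra hmem
    simp only [Set.mem_union, Set.mem_ofPred_eq, not_or, not_le, Real.dist_eq] at hmem hω
    have := hAS n ω hmem.2
    have := abs_sub_le (A n ω) (S n ω) c
    linarith
  have hsum := (tendstoInMeasure_iff_dist.mp hS (ε / 2) (by positivity)).add hB
  rw [add_zero] at hsum
  exact tendsto_of_tendsto_of_tendsto_of_le_of_le tendsto_const_nhds hsum (fun _ => zero_le)
    fun n => (measure_mono (hincl n)).trans (measure_union_le _ _)

end

theorem stmt_3_general
    {𝒳 : Type*} [MetricSpace 𝒳] [CompactSpace 𝒳] [MeasurableSpace 𝒳] [BorelSpace 𝒳]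
    {Ω : Type*} [MeasurableSpace Ω] (μ : Measure Ω) [IsProbabilityMeasure μ]
    (δ : ℝ) (hδ : δ ∈ Set.Ioo (0 : ℝ) (1/2))
    (p : C(𝒳, ℝ)) (hp : ∀ x, δ ≤ p x ∧ p x ≤ 1 - δ)
    (X : ℕ → Ω → 𝒳) (T : ℕ → Ω → ℝ) (Y : ℕ → Ω → ℝ)
    (hXm : ∀ i, Measurable (X i))
    (hT01 : ∀ i ω, T i ω = 0 ∨ T i ω = 1)
    (hindep : iIndepFun
      (fun i ω => (X i ω, T i ω, Y i ω)) μ)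
    (hident : ∀ i, IdentDistrib (fun ω => (X i ω, T i ω, Y i ω))
      (fun ω => (X 0 ω, T 0 ω, Y 0 ω)) μ μ)
    (hcond : (fun ω => p (X 0 ω))
      =ᵐ[μ] μ[T 0 | MeasurableSpace.comap (X 0) inferInstance])
    (phat : ℕ → Ω → C(𝒳, ℝ))
    (hconv : ∀ ε > (0 : ℝ),
      Tendsto (fun n => μ {ω | (⨆ x, |phat n ω x - p x|) > ε}) atTop (nhds 0)) :
    ∀ ε > (0 : ℝ),
      Tendsto (fun n : ℕ => μ {ω |
          |(1 / (n : ℝ)) * ∑ i ∈ Finset.range n, T i ω / phat n ω (X i ω) - 1| > ε})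
        atTop (nhds 0) := by
  obtain ⟨hδ0, -⟩ := hδ
  have hT : ∀ i ω, |T i ω| ≤ 1 := fun i ω => by rcases hT01 i ω with h | h <;> simp [h]
  have hpX : ∀ ω, |(p (X 0 ω))⁻¹| ≤ δ⁻¹ := fun ω => by
    rw [abs_inv, abs_of_pos (hδ0.trans_le (hp _).1)]
    exact inv_anti₀ hδ0 (hp _).1
  set g : 𝒳 × ℝ × ℝ → ℝ := fun z => z.2.1 / p z.1
  have hg : Measurable g :=
    (measurable_fst.comp measurable_snd).div (p.measurable.comp measurable_fst)
  have hZ0 := (hident 0).aemeasurable_fst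
  have hT0 : Integrable (T 0) μ := .of_bound
    ((measurable_fst.comp measurable_snd).comp_aemeasurable hZ0).aestronglyMeasurable 1
    (ae_of_all _ (hT 0))
  have hW0 : Integrable (fun ω => T 0 ω / p (X 0 ω)) μ := .of_bound
    (hg.comp_aemeasurable hZ0).aestronglyMeasurable δ⁻¹ <| ae_of_all _ fun ω => by
      simpa [div_eq_mul_inv, abs_mul] using mul_le_mul (hT 0 ω) (hpX ω) (abs_nonneg _) zero_le_one
  have hS : TendstoInMeasure μ (fun n ω => (∑ i ∈ range n, T i ω / p (X i ω)) / n) atTop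
      (fun _ => 1) := by
    have := weak_law_real (W := fun i ω => g (X i ω, T i ω, Y i ω)) hW0
      (fun i j hij => (hindep.indepFun hij).comp hg hg) (fun i => (hident i).comp hg)
    rwa [integral_div_eq_one_of_condExp_eq (hXm 0) p.measurable
      (fun x => (hδ0.trans_le (hp x).1).ne') hT0 hW0 hcond] at this
  intro ε hε
  set η := min (δ / 2) (ε * δ ^ 2 / 4)
  have hηε : 2 * η / δ ^ 2 ≤ ε / 2 := by
    rw [div_le_iff₀ (by positivity)]
    linarith [min_le_right (δ / 2) (ε * δ ^ 2 / 4)]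
  refine tendsto_measure_abs_sub_gt_of_close hε hS (hconv η (by positivity)) fun n ω hω => ?_
  rw [one_div_mul_eq_div]
  exact (abs_avg_div_sub_avg_div_le hδ0 (min_le_left _ _) p (phat n ω) (fun x => (hp x).1)
    (not_lt.mp hω) (hT · ω) (X · ω) n).trans hηε

/-- With an estimated propensity score `p̂ₙ` that is uniformly consistent in
probability, `(1/n) Σ_{i=1}^{n} Tᵢ/p̂ₙ(Xᵢ) → 1` in probability as `n → ∞`. -/
theorem stmt_3
    {𝒳 : Type*} [MetricSpace 𝒳] [CompactSpace 𝒳] [MeasurableSpace 𝒳] [BorelSpace 𝒳]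
    {Ω : Type*} [MeasurableSpace Ω] (μ : Measure Ω) [IsProbabilityMeasure μ]
    (δ : ℝ) (hδ : δ ∈ Set.Ioo (0 : ℝ) (1/2))
    (p : C(𝒳, ℝ)) (hp : ∀ x, δ ≤ p x ∧ p x ≤ 1 - δ)
    (X : ℕ → Ω → 𝒳) (T : ℕ → Ω → ℝ) (Y : ℕ → Ω → ℝ)
    (hXm : ∀ i, Measurable (X i)) (hTm : ∀ i, Measurable (T i)) (hYm : ∀ i, Measurable (Y i))
    (hT01 : ∀ i ω, T i ω = 0 ∨ T i ω = 1)
    (hindep : iIndepFun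
      (fun i ω => (X i ω, T i ω, Y i ω)) μ)
    (hident : ∀ i, IdentDistrib (fun ω => (X i ω, T i ω, Y i ω))
      (fun ω => (X 0 ω, T 0 ω, Y 0 ω)) μ μ)
    (hcond : (fun ω => p (X 0 ω))
      =ᵐ[μ] μ[T 0 | MeasurableSpace.comap (X 0) inferInstance])
    [MeasurableSpace C(𝒳, ℝ)] [BorelSpace C(𝒳, ℝ)]
    (phat : ℕ → Ω → C(𝒳, ℝ)) (hmeas : ∀ n, Measurable (phat n))
    (hconv : ∀ ε > (0 : ℝ),
      Tendsto (fun n => μ {ω | (⨆ x, |phat n ω x - p x|) > ε}) atTop (nhds 0)) :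
    ∀ ε > (0 : ℝ),
      Tendsto (fun n : ℕ => μ {ω |
          |(1 / (n : ℝ)) * ∑ i ∈ Finset.range n, T i ω / phat n ω (X i ω) - 1| > ε})
        atTop (nhds 0) :=
  stmt_3_general μ δ hδ p hp X T Y hXm hT01 hindep hident hcond phat hconv
end

section
/- If S := (1/n) Σ_{i=1}^{n} tᵢ/p̂(xᵢ) > 0, then sup_{y ∈ ℝ} |F̂(y) − F̃(y)| ≤ sup_{x ∈ 𝒳} |1/p̂(x) − 1/p(x)| + |S⁻¹ − 1| · (1/n) Σ_{i=1}^{n} tᵢ/p(xᵢ). -/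
/-!
Write `A y = (1/n) Σ tᵢ/p̂(xᵢ) 1{yᵢ ≤ y}`, so that `F̂ y = A y / S`, and split
`F̂ - F̃ = S⁻¹ (A - F̃) + (S⁻¹ - 1) F̃`. Each weight satisfies
`|tᵢ/p̂(xᵢ) - tᵢ/p(xᵢ)| ≤ D · tᵢ/p̂(xᵢ)` with `D = sup |1/p̂ - 1/p|` because `p̂ ≤ 1`,
hence `|A - F̃| ≤ D S`; and `0 ≤ F̃ ≤ (1/n) Σ tᵢ/p(xᵢ)` since the indicators lie in `[0, 1]`.
-/

open Finset

section LinearOrderedField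

variable {K : Type*} [Field K] [LinearOrder K] [IsStrictOrderedRing K]

theorem abs_div_sub_le_of_abs_sub_le {A B S T D : K} (hS : 0 < S)
    (hAB : |A - B| ≤ D * S) (hB₀ : 0 ≤ B) (hBT : B ≤ T) :
    |A / S - B| ≤ D + |S⁻¹ - 1| * T := by
  calc |A / S - B| = |S⁻¹ * (A - B) + (S⁻¹ - 1) * B| := by congr 1; ring
    _ ≤ |S⁻¹ * (A - B)| + |(S⁻¹ - 1) * B| := abs_add_le _ _
    _ = S⁻¹ * |A - B| + |S⁻¹ - 1| * B := by
        rw [abs_mul, abs_mul, abs_of_pos (inv_pos.2 hS), abs_of_nonneg hB₀]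
    _ ≤ S⁻¹ * (D * S) + |S⁻¹ - 1| * T := by gcongr
    _ = D + |S⁻¹ - 1| * T := by field_simp

theorem abs_div_sub_div_le_mul_div {t q r D : K} (ht : 0 ≤ t) (hq₀ : 0 < q) (hq₁ : q ≤ 1)
    (hD₀ : 0 ≤ D) (hD : |1 / q - 1 / r| ≤ D) :
    |t / q - t / r| ≤ D * (t / q) := by
  have ht_le : t ≤ t / q := le_div_self ht hq₀ hq₁
  calc |t / q - t / r| = t * |1 / q - 1 / r| := by
        rw [← mul_one_div t q, ← mul_one_div t r, ← mul_sub, abs_mul, abs_of_nonneg ht]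
    _ ≤ t * D := by gcongr
    _ ≤ (t / q) * D := by gcongr
    _ = D * (t / q) := mul_comm _ _

variable {ι : Type*} {s : Finset ι} {a b e : ι → K}

theorem Finset.sum_mul_le_sum_of_le_one (hb : ∀ i ∈ s, 0 ≤ b i) (he : ∀ i ∈ s, e i ≤ 1) :
    ∑ i ∈ s, b i * e i ≤ ∑ i ∈ s, b i :=
  sum_le_sum fun i hi => mul_le_of_le_one_right (hb i hi) (he i hi)

theorem Finset.abs_sum_mul_sub_sum_mul_le {D : K} (hab : ∀ i ∈ s, |a i - b i| ≤ D * a i)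
    (he₀ : ∀ i ∈ s, 0 ≤ e i) (he₁ : ∀ i ∈ s, e i ≤ 1) :
    |∑ i ∈ s, a i * e i - ∑ i ∈ s, b i * e i| ≤ D * ∑ i ∈ s, a i := by
  rw [← sum_sub_distrib, mul_sum]
  refine (abs_sum_le_sum_abs _ _).trans (sum_le_sum fun i hi => ?_)
  rw [← sub_mul, abs_mul, abs_of_nonneg (he₀ i hi)]
  exact (mul_le_of_le_one_right (abs_nonneg _) (he₁ i hi)).trans (hab i hi)

end LinearOrderedField

theorem stmt_4_general
    {𝒳 : Type*} (n : ℕ)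
    (x : Fin n → 𝒳) (t : Fin n → ℝ) (yv : Fin n → ℝ)
    (ht : ∀ i, t i = 0 ∨ t i = 1)
    (phat p : 𝒳 → ℝ)
    (hphat : ∀ z, 0 < phat z ∧ phat z ≤ 1) (hp : ∀ z, 0 < p z ∧ p z ≤ 1)
    (hbdd : BddAbove (Set.range fun z => |1 / phat z - 1 / p z|))
    (S : ℝ) (hS : S = (1 / (n : ℝ)) * ∑ i, t i / phat (x i)) (hSpos : 0 < S)
    (Fhat : ℝ → ℝ)
    (hFhat : ∀ y, Fhat y = ∑ i, ((t i / phat (x i)) / (∑ k, t k / phat (x k))) *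
      (if yv i ≤ y then (1 : ℝ) else 0))
    (Ftilde : ℝ → ℝ)
    (hFtilde : ∀ y, Ftilde y = (1 / (n : ℝ)) * ∑ i, (t i / p (x i)) *
      (if yv i ≤ y then (1 : ℝ) else 0)) :
    (⨆ y : ℝ, |Fhat y - Ftilde y|) ≤
      (⨆ z : 𝒳, |1 / phat z - 1 / p z|) +
        |S⁻¹ - 1| * ((1 / (n : ℝ)) * ∑ i, t i / p (x i)) := by
  set D := ⨆ z : 𝒳, |1 / phat z - 1 / p z|
  have hD₀ : 0 ≤ D := Real.iSup_nonneg fun z => abs_nonneg _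
  have ht₀ : ∀ i, 0 ≤ t i := fun i => by rcases ht i with h | h <;> simp [h]
  have hc : (1 / (n : ℝ)) ≠ 0 := left_ne_zero_of_mul (hS ▸ hSpos.ne')
  have hweights : ∀ i ∈ univ, |t i / phat (x i) - t i / p (x i)| ≤ D * (t i / phat (x i)) :=
    fun i _ => abs_div_sub_div_le_mul_div (ht₀ i) (hphat _).1 (hphat _).2 hD₀ (le_ciSup hbdd _)
  have hp_weights : ∀ i ∈ univ, 0 ≤ t i / p (x i) := fun i _ => div_nonneg (ht₀ i) (hp _).1.le
  refine ciSup_le fun y => ?_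
  have he₀ : ∀ i ∈ univ, (0 : ℝ) ≤ if yv i ≤ y then 1 else 0 := fun i _ => by split_ifs <;> simp
  have he₁ : ∀ i ∈ univ, (if yv i ≤ y then 1 else 0 : ℝ) ≤ 1 := fun i _ => by split_ifs <;> simp
  have hFhat_eq : Fhat y =
      (1 / (n : ℝ)) * (∑ i, t i / phat (x i) * if yv i ≤ y then 1 else 0) / S := by
    rw [hFhat, hS, mul_div_mul_left _ _ hc, sum_div]
    simp only [div_mul_eq_mul_div]
  rw [hFhat_eq, hFtilde]
  refine abs_div_sub_le_of_abs_sub_le hSpos ?_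
    (mul_nonneg (by positivity) (sum_nonneg fun i hi => mul_nonneg (hp_weights i hi) (he₀ i hi)))
    (mul_le_mul_of_nonneg_left (sum_mul_le_sum_of_le_one hp_weights he₁) (by positivity))
  rw [← mul_sub, abs_mul, abs_of_pos (by positivity), hS, mul_left_comm]
  gcongr
  exact abs_sum_mul_sub_sum_mul_le hweights he₀ he₁

/-- Deterministic bound of Lemma 3: if `S = (1/n) Σ tᵢ/p̂(xᵢ) > 0`, then
`sup_y |F̂(y) − F̃(y)| ≤ sup_x |1/p̂(x) − 1/p(x)| + |S⁻¹ − 1| · (1/n) Σ tᵢ/p(xᵢ)`. -/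
theorem stmt_4
    {𝒳 : Type*} (n : ℕ) (hn : 0 < n)
    (x : Fin n → 𝒳) (t : Fin n → ℝ) (yv : Fin n → ℝ)
    (ht : ∀ i, t i = 0 ∨ t i = 1)
    (phat p : 𝒳 → ℝ)
    (hphat : ∀ z, 0 < phat z ∧ phat z ≤ 1) (hp : ∀ z, 0 < p z ∧ p z ≤ 1)
    (hbdd : BddAbove (Set.range fun z => |1 / phat z - 1 / p z|))
    (S : ℝ) (hS : S = (1 / (n : ℝ)) * ∑ i, t i / phat (x i)) (hSpos : 0 < S)
    (Fhat : ℝ → ℝ)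
    (hFhat : ∀ y, Fhat y = ∑ i, ((t i / phat (x i)) / (∑ k, t k / phat (x k))) *
      (if yv i ≤ y then (1 : ℝ) else 0))
    (Ftilde : ℝ → ℝ)
    (hFtilde : ∀ y, Ftilde y = (1 / (n : ℝ)) * ∑ i, (t i / p (x i)) *
      (if yv i ≤ y then (1 : ℝ) else 0)) :
    (⨆ y : ℝ, |Fhat y - Ftilde y|) ≤
      (⨆ z : 𝒳, |1 / phat z - 1 / p z|) +
        |S⁻¹ - 1| * ((1 / (n : ℝ)) * ∑ i, t i / p (x i)) :=
  stmt_4_general n x t yv ht phat p hphat hp hbdd S hS hSpos Fhat hFhat Ftilde hFtilde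
end

section
/- sup_{y ∈ ℝ} |F̂₁,ₙ(y) − F̃₁,ₙ(y)| → 0 in probability as n → ∞; i.e., for every ε > 0, P( sup_y |F̂₁,ₙ(y) − F̃₁,ₙ(y)| > ε ) → 0. -/
/-!
Write `aᵢ = Tᵢ / p̂ₙ(Xᵢ)` and `bᵢ = Tᵢ / p(Xᵢ)`. For nonnegative weights and indicators
`χᵢ ∈ [0, 1]`, the self-normalised average `∑ aᵢ χᵢ / ∑ aₖ` differs from `(1/n) ∑ bᵢ χᵢ` by at
most `(2 ∑ |aᵢ - bᵢ| + |∑ bᵢ - n|) / n`, uniformly in the indicators, hence in `y`. Since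
`p ≥ δ`, uniform consistency of `p̂ₙ` makes every `|aᵢ - bᵢ|` small; and since
`E[T / p(X)] = E[E[T | X] / p(X)] = 1`, the strong law of large numbers makes `|∑ bᵢ / n - 1|`
small with probability tending to one.
-/

open MeasureTheory ProbabilityTheory Filter Finset

section Deterministic

theorem abs_sum_div_sum_mul_sub_le {ι : Type*} (s : Finset ι) {a b χ : ι → ℝ} {N : ℝ}
    (hN : 0 < N) (ha : ∀ i ∈ s, 0 ≤ a i) (hχ : ∀ i ∈ s, χ i ∈ Set.Icc (0 : ℝ) 1) :
    |∑ i ∈ s, a i / (∑ k ∈ s, a k) * χ i - 1 / N * ∑ i ∈ s, b i * χ i|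
      ≤ (2 * ∑ i ∈ s, |a i - b i| + |∑ i ∈ s, b i - N|) / N := by
  set A := ∑ k ∈ s, a k
  set Aχ := ∑ i ∈ s, a i * χ i
  set Bχ := ∑ i ∈ s, b i * χ i
  have hAχ_nonneg : 0 ≤ Aχ := sum_nonneg fun i hi => mul_nonneg (ha i hi) (hχ i hi).1
  have hAχ_le : Aχ ≤ A := sum_le_sum fun i hi => mul_le_of_le_one_right (ha i hi) (hχ i hi).2
  have hr_nonneg : 0 ≤ Aχ / A := div_nonneg hAχ_nonneg (hAχ_nonneg.trans hAχ_le)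
  have hr_le : Aχ / A ≤ 1 := div_le_one_of_le₀ hAχ_le (hAχ_nonneg.trans hAχ_le)
  have hdiff : |Aχ - Bχ| ≤ ∑ i ∈ s, |a i - b i| := by
    rw [← sum_sub_distrib]
    refine (abs_sum_le_sum_abs _ _).trans (sum_le_sum fun i hi => ?_)
    rw [← sub_mul, abs_mul, abs_of_nonneg (hχ i hi).1]
    exact mul_le_of_le_one_right (abs_nonneg _) (hχ i hi).2
  have hmass : |A - N| ≤ ∑ i ∈ s, |a i - b i| + |∑ i ∈ s, b i - N| := by
    calc |A - N| = |∑ i ∈ s, (a i - b i) + (∑ i ∈ s, b i - N)| := by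
          congr 1; rw [sum_sub_distrib]; ring
      _ ≤ _ := (abs_add_le _ _).trans (add_le_add_left (abs_sum_le_sum_abs _ _) _)
  have hsplit : ∑ i ∈ s, a i / A * χ i - 1 / N * Bχ = (Aχ / A * (N - A) + (Aχ - Bχ)) / N := by
    simp_rw [div_mul_eq_mul_div, ← sum_div]
    -- With `A = 0` the nonnegative numerator `Aχ ≤ A` vanishes too, so `x / 0 = 0` is harmless.
    rcases eq_or_ne A 0 with hA | hA
    · have : Aχ = 0 := le_antisymm (hA ▸ hAχ_le) hAχ_nonneg
      simp only [hA, div_zero, one_mul, zero_sub, this, sub_zero, zero_mul, zero_add]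
      ring
    · field_simp
      ring
  rw [hsplit, abs_div, abs_of_pos hN]
  refine div_le_div_of_nonneg_right ?_ hN.le
  calc |Aχ / A * (N - A) + (Aχ - Bχ)| ≤ |Aχ / A * (N - A)| + |Aχ - Bχ| := abs_add_le _ _
    _ = Aχ / A * |A - N| + |Aχ - Bχ| := by rw [abs_mul, abs_of_nonneg hr_nonneg, abs_sub_comm]
    _ ≤ 1 * |A - N| + |Aχ - Bχ| := by gcongr
    _ ≤ _ := by linarith

theorem abs_div_sub_div_le {t P Q δ : ℝ} (ht : |t| ≤ 1) (hδ : 0 < δ) (hQ : δ ≤ Q)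
    (hPQ : |P - Q| ≤ δ / 2) : |t / P - t / Q| ≤ 2 * |P - Q| / δ ^ 2 := by
  have hP : δ / 2 ≤ P := by linarith [(abs_le.mp hPQ).1]
  have hP0 : 0 < P := by linarith
  have hQ0 : 0 < Q := by linarith
  have hrewrite : t / P - t / Q = t * (Q - P) / (P * Q) := by field_simp
  rw [hrewrite, abs_div, abs_mul, abs_sub_comm, abs_of_pos (mul_pos hP0 hQ0)]
  calc |t| * |P - Q| / (P * Q) ≤ 1 * |P - Q| / (δ / 2 * δ) := by gcongr
    _ = 2 * |P - Q| / δ ^ 2 := by field_simp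

end Deterministic

noncomputable section HajekEstimator

def hajekCDF (w Y : ℕ → ℝ) (n : ℕ) (y : ℝ) : ℝ :=
  ∑ i ∈ range n, w i / (∑ k ∈ range n, w k) * (if Y i ≤ y then 1 else 0)

def ipwCDF (w Y : ℕ → ℝ) (n : ℕ) (y : ℝ) : ℝ :=
  1 / (n : ℝ) * ∑ i ∈ range n, w i * (if Y i ≤ y then 1 else 0)

theorem abs_hajekCDF_sub_ipwCDF_le {n : ℕ} (hn : 0 < n) {a b : ℕ → ℝ} (ha : ∀ i, 0 ≤ a i)
    {κ : ℝ} (hab : ∀ i, |a i - b i| ≤ κ) (Y : ℕ → ℝ) (y : ℝ) :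
    |hajekCDF a Y n y - ipwCDF b Y n y| ≤ 2 * κ + |(∑ i ∈ range n, b i) / n - 1| := by
  have hn' : (0 : ℝ) < n := by exact_mod_cast hn
  refine (abs_sum_div_sum_mul_sub_le (range n) hn' (fun i _ => ha i)
    (fun i _ => by split_ifs <;> simp)).trans ?_
  have hsum : ∑ i ∈ range n, |a i - b i| ≤ n * κ := by
    simpa using sum_le_sum fun i (_ : i ∈ range n) => hab i
  have hdev : |∑ i ∈ range n, b i - n| / n = |(∑ i ∈ range n, b i) / n - 1| := by
    rw [← abs_of_pos hn', ← abs_div, abs_of_pos hn', sub_div, div_self hn'.ne']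
  rw [add_div, hdev]
  gcongr
  rw [div_le_iff₀ hn']
  linarith

end HajekEstimator

section Probability

variable {Ω 𝒳 : Type*} [MeasurableSpace Ω] [MeasurableSpace 𝒳] {μ : Measure Ω}

theorem integrable_div_comp {X : Ω → 𝒳} {T : Ω → ℝ} {p : 𝒳 → ℝ} {δ : ℝ} (hX : Measurable X)
    (hT : Integrable T μ) (hp : Measurable p) (hδ : 0 < δ) (hpδ : ∀ x, δ ≤ p x) :
    Integrable (fun ω => T ω / p (X ω)) μ := by
  simp_rw [div_eq_inv_mul]
  refine hT.bdd_mul (c := δ⁻¹) (hp.comp hX).inv.aestronglyMeasurable (ae_of_all _ fun ω => ?_)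
  rw [norm_inv, Real.norm_of_nonneg (hδ.le.trans (hpδ _))]
  exact inv_anti₀ hδ (hpδ _)

theorem integral_div_comp_eq_one [IsProbabilityMeasure μ] {X : Ω → 𝒳} {T : Ω → ℝ}
    {p : 𝒳 → ℝ} {δ : ℝ} (hX : Measurable X) (hT : Integrable T μ) (hp : Measurable p)
    (hδ : 0 < δ) (hpδ : ∀ x, δ ≤ p x)
    (hcond : (fun ω => p (X ω)) =ᵐ[μ] μ[T | MeasurableSpace.comap X inferInstance]) :
    ∫ ω, T ω / p (X ω) ∂μ = 1 := by
  set g : Ω → ℝ := fun ω => (p (X ω))⁻¹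
  have hg : StronglyMeasurable[MeasurableSpace.comap X inferInstance] g :=
    (hp.comp (comap_measurable X)).inv.stronglyMeasurable
  have hgT : Integrable (g * T) μ := by
    convert integrable_div_comp hX hT hp hδ hpδ using 1
    funext ω
    exact (div_eq_inv_mul _ _).symm
  have hpull : μ[g * T | MeasurableSpace.comap X inferInstance] =ᵐ[μ] fun _ => (1 : ℝ) := by
    filter_upwards [condExp_mul_of_stronglyMeasurable_left hg hgT hT, hcond] with ω hω hpω
    rw [hω, Pi.mul_apply, ← hpω]
    exact inv_mul_cancel₀ (hδ.trans_le (hpδ _)).ne'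
  calc ∫ ω, T ω / p (X ω) ∂μ = ∫ ω, (g * T) ω ∂μ := by simp only [Pi.mul_apply, g, div_eq_inv_mul]
    _ = ∫ ω, μ[g * T | MeasurableSpace.comap X inferInstance] ω ∂μ :=
        (integral_condExp hX.comap_le).symm
    _ = 1 := by rw [integral_congr_ae hpull]; simp

theorem tendstoInMeasure_average_of_identDistrib [IsProbabilityMeasure μ] (Z : ℕ → Ω → ℝ)
    (hint : Integrable (Z 0) μ) (hindep : Pairwise (Function.onFun (IndepFun · · μ) Z))
    (hident : ∀ i, IdentDistrib (Z i) (Z 0) μ μ) :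
    TendstoInMeasure μ (fun n ω => (∑ i ∈ range n, Z i ω) / n) atTop
      (fun _ => ∫ ω, Z 0 ω ∂μ) := by
  refine tendstoInMeasure_of_tendsto_ae (fun n => ?_) (strong_law_ae_real Z hint hindep hident)
  have hZ : ∀ i, Integrable (Z i) μ := fun i => (hident i).integrable_iff.mpr hint
  exact ((integrable_finsetSum _ fun i _ => hZ i).div_const _).aestronglyMeasurable

theorem tendsto_measure_of_subset_union {ι : Type*} {l : Filter ι} {A B C : ι → Set Ω}
    (hsub : ∀ᶠ n in l, A n ⊆ B n ∪ C n) (hB : Tendsto (fun n => μ (B n)) l (nhds 0))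
    (hC : Tendsto (fun n => μ (C n)) l (nhds 0)) : Tendsto (fun n => μ (A n)) l (nhds 0) := by
  refine tendsto_of_tendsto_of_tendsto_of_le_of_le' tendsto_const_nhds
    (by simpa using hB.add hC) (Eventually.of_forall fun _ => bot_le) ?_
  exact hsub.mono fun n h => (measure_mono h).trans (measure_union_le _ _)

end Probability

theorem stmt_5_general
    {𝒳 : Type*} [MetricSpace 𝒳] [CompactSpace 𝒳] [MeasurableSpace 𝒳] [BorelSpace 𝒳]
    {Ω : Type*} [MeasurableSpace Ω] (μ : Measure Ω) [IsProbabilityMeasure μ]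
    (δ : ℝ) (hδ : δ ∈ Set.Ioo (0 : ℝ) (1/2))
    (p : C(𝒳, ℝ)) (hp : ∀ x, δ ≤ p x ∧ p x ≤ 1 - δ)
    (X : ℕ → Ω → 𝒳) (T : ℕ → Ω → ℝ) (Y : ℕ → Ω → ℝ)
    (hXm : ∀ i, Measurable (X i)) (hTm : ∀ i, Measurable (T i))
    (hT01 : ∀ i ω, T i ω = 0 ∨ T i ω = 1)
    (hindep : iIndepFun
      (fun i ω => (X i ω, T i ω, Y i ω)) μ)
    (hident : ∀ i, IdentDistrib (fun ω => (X i ω, T i ω, Y i ω))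
      (fun ω => (X 0 ω, T 0 ω, Y 0 ω)) μ μ)
    (hcond : (fun ω => p (X 0 ω))
      =ᵐ[μ] μ[T 0 | MeasurableSpace.comap (X 0) inferInstance])
    (phat : ℕ → Ω → C(𝒳, ℝ))
    (hconv : ∀ ε > (0 : ℝ),
      Tendsto (fun n => μ {ω | (⨆ x, |phat n ω x - p x|) > ε}) atTop (nhds 0))
    (Fhat Ftilde : ℕ → Ω → ℝ → ℝ)
    (hFhat : ∀ n ω y, Fhat n ω y = ∑ i ∈ Finset.range n,
      ((T i ω / phat n ω (X i ω)) / ∑ k ∈ Finset.range n, T k ω / phat n ω (X k ω)) *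
        (if Y i ω ≤ y then (1 : ℝ) else 0))
    (hFtilde : ∀ n ω y, Ftilde n ω y = (1 / (n : ℝ)) * ∑ i ∈ Finset.range n,
      (T i ω / p (X i ω)) * (if Y i ω ≤ y then (1 : ℝ) else 0)) :
    ∀ ε > (0 : ℝ),
      Tendsto (fun n : ℕ => μ {ω | (⨆ y : ℝ, |Fhat n ω y - Ftilde n ω y|) > ε})
        atTop (nhds 0) := by
  intro ε hε
  have hδ0 : 0 < δ := hδ.1
  have hT_abs : ∀ i ω, |T i ω| ≤ 1 := fun i ω => by rcases hT01 i ω with h | h <;> simp [h]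
  have hT0 : Integrable (T 0) μ :=
    .of_bound (hTm 0).aestronglyMeasurable 1 (ae_of_all _ (hT_abs 0))
  have hφ : Measurable fun v : 𝒳 × ℝ × ℝ => v.2.1 / p v.1 :=
    measurable_snd.fst.div (p.continuous.measurable.comp measurable_fst)
  have hlln := tendstoInMeasure_average_of_identDistrib (fun i ω => T i ω / p (X i ω))
    (integrable_div_comp (hXm 0) hT0 p.continuous.measurable hδ0 fun x => (hp x).1)
    (fun i j hij => (hindep.indepFun hij).comp hφ hφ) (fun i => (hident i).comp hφ)
  rw [integral_div_comp_eq_one (hXm 0) hT0 p.continuous.measurable hδ0 (fun x => (hp x).1)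
    hcond] at hlln
  set η := min (δ / 2) (ε * δ ^ 2 / 8)
  refine tendsto_measure_of_subset_union ?_ (hconv η (by positivity))
    (tendstoInMeasure_iff_dist.mp hlln (ε / 2) (half_pos hε))
  filter_upwards [eventually_gt_atTop 0] with n hn ω hω
  simp only [Set.mem_union, Set.mem_ofPred_eq]
  by_contra! ⟨hphat, hmean⟩
  have hclose : ∀ x, |phat n ω x - p x| ≤ η := fun x =>
    (le_ciSup (isCompact_range ((phat n ω).continuous.sub p.continuous).abs).bddAbove x).trans
      hphat
  have hweight : ∀ i, |T i ω / phat n ω (X i ω) - T i ω / p (X i ω)| ≤ ε / 4 := fun i =>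
    calc _ ≤ 2 * |phat n ω (X i ω) - p (X i ω)| / δ ^ 2 :=
          abs_div_sub_div_le (hT_abs i ω) hδ0 (hp _).1 ((hclose _).trans (min_le_left _ _))
      _ ≤ 2 * (ε * δ ^ 2 / 8) / δ ^ 2 := by gcongr; exact (hclose _).trans (min_le_right _ _)
      _ = ε / 4 := by field_simp; ring
  have hphat_pos : ∀ x, 0 < phat n ω x := fun x => by
    linarith [(abs_le.mp (hclose x)).1, (hp x).1, min_le_left (δ / 2) (ε * δ ^ 2 / 8)]
  have hpos : ∀ i, 0 ≤ T i ω / phat n ω (X i ω) := fun i =>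
    div_nonneg (by rcases hT01 i ω with h | h <;> simp [h]) (hphat_pos _).le
  refine hω.not_ge (Real.iSup_le (fun y => ?_) hε.le)
  rw [hFhat, hFtilde]
  refine (abs_hajekCDF_sub_ipwCDF_le hn hpos hweight (fun i => Y i ω) y).trans ?_
  rw [Real.dist_eq] at hmean
  linarith

/-- `sup_y |F̂₁,ₙ(y) − F̃₁,ₙ(y)| → 0` in probability, where `F̂₁,ₙ` is the
Hájek-type estimator built from the estimated propensity score and `F̃₁,ₙ` is the
pseudo-estimator built from the true propensity score. -/
theorem stmt_5
    {𝒳 : Type*} [MetricSpace 𝒳] [CompactSpace 𝒳] [MeasurableSpace 𝒳] [BorelSpace 𝒳]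
    {Ω : Type*} [MeasurableSpace Ω] (μ : Measure Ω) [IsProbabilityMeasure μ]
    (δ : ℝ) (hδ : δ ∈ Set.Ioo (0 : ℝ) (1/2))
    (p : C(𝒳, ℝ)) (hp : ∀ x, δ ≤ p x ∧ p x ≤ 1 - δ)
    (X : ℕ → Ω → 𝒳) (T : ℕ → Ω → ℝ) (Y : ℕ → Ω → ℝ)
    (hXm : ∀ i, Measurable (X i)) (hTm : ∀ i, Measurable (T i)) (hYm : ∀ i, Measurable (Y i))
    (hT01 : ∀ i ω, T i ω = 0 ∨ T i ω = 1)
    (hindep : iIndepFun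
      (fun i ω => (X i ω, T i ω, Y i ω)) μ)
    (hident : ∀ i, IdentDistrib (fun ω => (X i ω, T i ω, Y i ω))
      (fun ω => (X 0 ω, T 0 ω, Y 0 ω)) μ μ)
    (hcond : (fun ω => p (X 0 ω))
      =ᵐ[μ] μ[T 0 | MeasurableSpace.comap (X 0) inferInstance])
    [MeasurableSpace C(𝒳, ℝ)] [BorelSpace C(𝒳, ℝ)]
    (phat : ℕ → Ω → C(𝒳, ℝ)) (hmeas : ∀ n, Measurable (phat n))
    (hconv : ∀ ε > (0 : ℝ),
      Tendsto (fun n => μ {ω | (⨆ x, |phat n ω x - p x|) > ε}) atTop (nhds 0))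
    (Fhat Ftilde : ℕ → Ω → ℝ → ℝ)
    (hFhat : ∀ n ω y, Fhat n ω y = ∑ i ∈ Finset.range n,
      ((T i ω / phat n ω (X i ω)) / ∑ k ∈ Finset.range n, T k ω / phat n ω (X k ω)) *
        (if Y i ω ≤ y then (1 : ℝ) else 0))
    (hFtilde : ∀ n ω y, Ftilde n ω y = (1 / (n : ℝ)) * ∑ i ∈ Finset.range n,
      (T i ω / p (X i ω)) * (if Y i ω ≤ y then (1 : ℝ) else 0)) :
    ∀ ε > (0 : ℝ),
      Tendsto (fun n : ℕ => μ {ω | (⨆ y : ℝ, |Fhat n ω y - Ftilde n ω y|) > ε})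
        atTop (nhds 0) :=
  stmt_5_general μ δ hδ p hp X T Y hXm hTm hT01 hindep hident hcond phat hconv Fhat Ftilde hFhat
    hFtilde
end

section
/- sup_{y ∈ ℝ} |F̃₁,ₙ(y) − F₁(y)| → 0 almost surely as n → ∞ (a Glivenko–Cantelli theorem for the inverse-propensity weighted pseudo-empirical distribution function; F₁ is not assumed continuous). -/
/-!
The weights `T / p(X)` lie in `[0, 1/δ]`, so `F₁` is the distribution function of the finite
measure `ν` obtained as the law of `Y` reweighted by `T / p(X)`. Slicing the range of `F₁` into
levels of height `ε` gives finitely many pairs of sets `A ⊆ Iic y ⊆ B` with `ν (B \ A) ≤ ε` serving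
every `y`; the functions `(T / p(X)) 1{Y ∈ A}` and `(T / p(X)) 1{Y ∈ B}` then bracket the class
`{(T / p(X)) 1{Y ≤ y}}` in `L¹`. The strong law of large numbers at the countably many bracket
functions yields uniform convergence, as in the bracketing proof of the Glivenko–Cantelli theorem.
Atoms of `ν` cause no trouble because the upper brackets are strict sublevel sets of `F₁`.
-/

open MeasureTheory ProbabilityTheory Filter Set Topology
open scoped NNReal

noncomputable section

section EmpiricalMean

variable {Ω β : Type*}

def empiricalMean (Z : ℕ → Ω → β) (g : β → ℝ) (n : ℕ) (ω : Ω) : ℝ :=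
  (∑ i ∈ Finset.range n, g (Z i ω)) / n

lemma empiricalMean_mono (Z : ℕ → Ω → β) {g h : β → ℝ} (hgh : g ≤ h) (n : ℕ) (ω : Ω) :
    empiricalMean Z g n ω ≤ empiricalMean Z h n ω :=
  div_le_div_of_nonneg_right (Finset.sum_le_sum fun _ _ => hgh _) n.cast_nonneg

variable [MeasurableSpace Ω] [MeasurableSpace β] {μ : Measure Ω}

lemma ae_tendsto_empiricalMean {Z : ℕ → Ω → β}
    (hindep : Pairwise fun i j => IndepFun (Z i) (Z j) μ)
    (hident : ∀ i, IdentDistrib (Z i) (Z 0) μ μ) {g : β → ℝ} (hg : Measurable g)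
    (hint : Integrable g (μ.map (Z 0))) :
    ∀ᵐ ω ∂μ, Tendsto (fun n => empiricalMean Z g n ω) atTop (𝓝 (∫ z, g z ∂μ.map (Z 0))) := by
  rw [integral_map (hident 0).aemeasurable_fst hg.aestronglyMeasurable]
  exact strong_law_ae_real (fun i ω => g (Z i ω))
    ((integrable_map_measure hg.aestronglyMeasurable (hident 0).aemeasurable_fst).1 hint)
    (fun i j hij => (hindep hij).comp hg hg) fun i => (hident i).comp hg

/-- Finiteness of the `L¹(P)` bracketing numbers of the class `{f y}`. -/
def FiniteBracketing {ι : Type*} (P : Measure β) (f : ι → β → ℝ) : Prop :=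
  ∀ ε > 0, ∃ (k : ℕ) (l u : Fin k → β → ℝ),
    (∀ j, Measurable (l j) ∧ Measurable (u j) ∧ Integrable (l j) P ∧ Integrable (u j) P ∧
      ∫ z, u j z ∂P - ∫ z, l j z ∂P ≤ ε) ∧
    ∀ y, ∃ j, l j ≤ f y ∧ f y ≤ u j

theorem ae_tendstoUniformly_empiricalMean_of_finiteBracketing {ι : Type*} {Z : ℕ → Ω → β}
    (hindep : Pairwise fun i j => IndepFun (Z i) (Z j) μ)
    (hident : ∀ i, IdentDistrib (Z i) (Z 0) μ μ) {f : ι → β → ℝ}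
    (hf : ∀ y, Integrable (f y) (μ.map (Z 0))) (hbr : FiniteBracketing (μ.map (Z 0)) f) :
    ∀ᵐ ω ∂μ, TendstoUniformly (fun n y => empiricalMean Z (f y) n ω)
      (fun y => ∫ z, f y z ∂μ.map (Z 0)) atTop := by
  choose k l u hlu hcover using fun m : ℕ => hbr (1 / (m + 1)) Nat.one_div_pos_of_nat
  have hconv : ∀ᵐ ω ∂μ, ∀ m j,
      Tendsto (fun n => empiricalMean Z (l m j) n ω) atTop (𝓝 (∫ z, l m j z ∂μ.map (Z 0))) ∧
      Tendsto (fun n => empiricalMean Z (u m j) n ω) atTop (𝓝 (∫ z, u m j z ∂μ.map (Z 0))) := by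
    simp only [ae_all_iff, eventually_and]
    exact fun m j => ⟨ae_tendsto_empiricalMean hindep hident (hlu m j).1 (hlu m j).2.2.1,
      ae_tendsto_empiricalMean hindep hident (hlu m j).2.1 (hlu m j).2.2.2.1⟩
  filter_upwards [hconv] with ω hω
  refine Metric.tendstoUniformly_iff.2 fun ε hε => ?_
  obtain ⟨m, hm⟩ := exists_nat_one_div_lt (by positivity : 0 < ε / 3)
  have hclose : ∀ᶠ n in atTop, ∀ j,
      dist (empiricalMean Z (l m j) n ω) (∫ z, l m j z ∂μ.map (Z 0)) < ε / 3 ∧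
      dist (empiricalMean Z (u m j) n ω) (∫ z, u m j z ∂μ.map (Z 0)) < ε / 3 := by
    refine eventually_all.2 fun j => ?_
    exact (Metric.tendsto_nhds.1 (hω m j).1 _ (by positivity)).and
      (Metric.tendsto_nhds.1 (hω m j).2 _ (by positivity))
  filter_upwards [hclose] with n hn y
  obtain ⟨j, hlf, hfu⟩ := hcover m y
  obtain ⟨-, -, hli, hui, hgap⟩ := hlu m j
  obtain ⟨hl, hu⟩ := hn j
  have hmean_l := empiricalMean_mono Z hlf n ω
  have hmean_u := empiricalMean_mono Z hfu n ω
  have hint_l := integral_mono hli (hf y) hlf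
  have hint_u := integral_mono (hf y) hui hfu
  rw [Real.dist_eq, abs_sub_lt_iff] at hl hu ⊢
  constructor <;> linarith

end EmpiricalMean

lemma tendsto_iSup_abs_sub_of_tendstoUniformly {α ι : Type*} {l : Filter α} {F : α → ι → ℝ}
    {f : ι → ℝ} (h : TendstoUniformly F f l) :
    Tendsto (fun n => ⨆ y, |F n y - f y|) l (𝓝 0) := by
  refine Metric.tendsto_nhds.2 fun ε hε => ?_
  filter_upwards [Metric.tendstoUniformly_iff.1 h (ε / 2) (half_pos hε)] with n hn
  have hle : ⨆ y, |F n y - f y| ≤ ε / 2 :=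
    Real.iSup_le (fun y => by rw [abs_sub_comm]; exact (hn y).le) (half_pos hε).le
  rw [Real.dist_eq, sub_zero, abs_of_nonneg (Real.iSup_nonneg fun y => abs_nonneg _)]
  linarith

lemma measurableSet_lowerBounds {α : Type*} [LinearOrder α] [TopologicalSpace α]
    [OrderClosedTopology α] [MeasurableSpace α] [OpensMeasurableSpace α] (s : Set α) :
    MeasurableSet (lowerBounds s) :=
  IsLowerSet.ordConnected (fun _ _ hba ha _ ht => hba.trans (mem_lowerBounds.1 ha _ ht))
    |>.measurableSet

section CDFBrackets

variable (ν : Measure ℝ) [IsFiniteMeasure ν]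

lemma monotone_measureReal_Iic : Monotone fun x => ν.real (Iic x) :=
  fun _ _ hxy => measureReal_mono (Iic_subset_Iic.2 hxy)

lemma measureReal_setOf_lt_diff_lowerBounds_le {a b : ℝ} (hab : a ≤ b) :
    ν.real ({x | ν.real (Iic x) < b} \ lowerBounds {t | a ≤ ν.real (Iic t)}) ≤ b - a := by
  have hmeas : MeasurableSet ({x | ν.real (Iic x) < b} \ lowerBounds {t | a ≤ ν.real (Iic t)}) :=
    ((monotone_measureReal_Iic ν).measurable measurableSet_Iio).diff (measurableSet_lowerBounds _)
  refine ENNReal.toReal_le_of_le_ofReal (sub_nonneg.2 hab) ?_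
  rw [hmeas.measure_eq_iSup_isCompact]
  refine iSup₂_le fun K hKsub => iSup_le fun hK => ?_
  rcases K.eq_empty_or_nonempty with rfl | hne
  · simp
  -- By inner regularity it suffices to treat a compact `K`: as `sInf K` is not a lower bound of
  -- the superlevel set, `K ⊆ Ioc t (sSup K)` with `a ≤ ν.real (Iic t)`, and
  -- `ν.real (Iic (sSup K)) < b`.
  obtain ⟨hsup, -⟩ := hKsub (hK.sSup_mem hne)
  obtain ⟨-, hinf⟩ := hKsub (hK.sInf_mem hne)
  obtain ⟨t, hat, htinf⟩ : ∃ t, a ≤ ν.real (Iic t) ∧ t < sInf K := by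
    simpa [mem_lowerBounds] using hinf
  have hKsub' : K ⊆ Iic (sSup K) \ Iic t := fun x hx =>
    ⟨le_csSup hK.bddAbove hx, not_le.2 (htinf.trans_le (csInf_le hK.bddBelow hx))⟩
  rw [ENNReal.le_ofReal_iff_toReal_le (measure_ne_top ν K) (sub_nonneg.2 hab)]
  calc ν.real K ≤ ν.real (Iic (sSup K) \ Iic t) := measureReal_mono hKsub'
    _ = ν.real (Iic (sSup K)) - ν.real (Iic t) :=
      measureReal_sdiff (Iic_subset_Iic.2 (htinf.trans_le
        (csInf_le hK.bddBelow (hK.sSup_mem hne))).le) measurableSet_Iic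
    _ ≤ b - a := by linarith [show ν.real (Iic (sSup K)) < b from hsup]

lemma exists_finite_brackets_Iic {ε : ℝ} (hε : 0 < ε) :
    ∃ (k : ℕ) (A B : Fin k → Set ℝ),
      (∀ j, MeasurableSet (A j) ∧ MeasurableSet (B j) ∧ ν.real (B j \ A j) ≤ ε) ∧
      ∀ y, ∃ j, A j ⊆ Iic y ∧ Iic y ⊆ B j := by
  refine ⟨⌊ν.real univ / ε⌋₊ + 1, fun j => lowerBounds {t | j * ε ≤ ν.real (Iic t)},
    fun j => {x | ν.real (Iic x) < (j + 1) * ε}, fun j => ⟨measurableSet_lowerBounds _,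
    (monotone_measureReal_Iic ν).measurable measurableSet_Iio, ?_⟩, fun y => ?_⟩
  · simpa [add_mul] using
      measureReal_setOf_lt_diff_lowerBounds_le ν (by nlinarith : (j : ℝ) * ε ≤ (j + 1) * ε)
  · refine ⟨⟨⌊ν.real (Iic y) / ε⌋₊, Nat.lt_succ_of_le (Nat.floor_mono ?_)⟩, fun x hx => hx ?_,
      fun x hx => ?_⟩
    · exact div_le_div_of_nonneg_right (measureReal_mono (subset_univ _)) hε.le
    · exact (le_div_iff₀ hε).1 (Nat.floor_le (by positivity))
    · exact (monotone_measureReal_Iic ν hx).trans_lt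
        ((div_lt_iff₀ hε).1 (Nat.lt_floor_add_one _))

end CDFBrackets

section WeightedIndicator

variable {P : Measure (ℝ≥0 × ℝ)}

/-- A point `z` is an observation `z.2` carrying the weight `z.1`; the weight is taken in `ℝ≥0` so
that `S ↦ weightedIndicator S` is pointwise monotone, as brackets require. -/
def weightedIndicator (S : Set ℝ) : ℝ≥0 × ℝ → ℝ :=
  (Prod.snd ⁻¹' S).indicator fun z => (z.1 : ℝ)

/-- The law of the observation under `P` reweighted by the weight: `F₁ y` is its mass of `Iic y`. -/
def weightedLaw (P : Measure (ℝ≥0 × ℝ)) : Measure ℝ :=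
  (P.withDensity fun z => z.1).map Prod.snd

lemma weightedIndicator_Iic_toNNReal {w : ℝ} (hw : 0 ≤ w) (v y : ℝ) :
    weightedIndicator (Iic y) (w.toNNReal, v) = w * if v ≤ y then 1 else 0 := by
  by_cases hv : v ≤ y
  · rw [weightedIndicator, indicator_of_mem (show (w.toNNReal, v) ∈ Prod.snd ⁻¹' Iic y from hv),
      Real.coe_toNNReal _ hw, if_pos hv, mul_one]
  · rw [weightedIndicator, indicator_of_notMem (show (w.toNNReal, v) ∉ Prod.snd ⁻¹' Iic y from hv),
      if_neg hv, mul_zero]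

lemma measurable_weightedIndicator {S : Set ℝ} (hS : MeasurableSet S) :
    Measurable (weightedIndicator S) :=
  measurable_fst.coe_nnreal_real.indicator (measurable_snd hS)

lemma weightedIndicator_mono {S T : Set ℝ} (hST : S ⊆ T) :
    weightedIndicator S ≤ weightedIndicator T :=
  indicator_le_indicator_of_subset (preimage_mono hST) fun z => z.1.coe_nonneg

lemma integrable_weightedIndicator (hP : Integrable (fun z => (z.1 : ℝ)) P) {S : Set ℝ}
    (hS : MeasurableSet S) : Integrable (weightedIndicator S) P :=
  hP.indicator (measurable_snd hS)

lemma isFiniteMeasure_weightedLaw (hP : Integrable (fun z => (z.1 : ℝ)) P) :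
    IsFiniteMeasure (weightedLaw P) := by
  have := isFiniteMeasure_withDensity (μ := P) (f := fun z => z.1)
    (by simp [lintegral_coe_eq_integral _ hP])
  unfold weightedLaw
  infer_instance

lemma integral_weightedIndicator (hP : Integrable (fun z => (z.1 : ℝ)) P) {S : Set ℝ}
    (hS : MeasurableSet S) : ∫ z, weightedIndicator S z ∂P = (weightedLaw P).real S := by
  rw [weightedIndicator, integral_indicator (measurable_snd hS), measureReal_def, weightedLaw,
    Measure.map_apply measurable_snd hS, withDensity_apply _ (measurable_snd hS),
    lintegral_coe_eq_integral _ hP.restrict, ENNReal.toReal_ofReal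
      (integral_nonneg fun z => z.1.coe_nonneg)]

lemma finiteBracketing_weightedIndicator_Iic (hP : Integrable (fun z => (z.1 : ℝ)) P) :
    FiniteBracketing P fun y => weightedIndicator (Iic y) := by
  have := isFiniteMeasure_weightedLaw hP
  intro ε hε
  obtain ⟨k, A, B, hAB, hcover⟩ := exists_finite_brackets_Iic (weightedLaw P) hε
  refine ⟨k, fun j => weightedIndicator (A j), fun j => weightedIndicator (B j), fun j => ?_,
    fun y => ?_⟩
  · obtain ⟨hA, hB, hgap⟩ := hAB j
    refine ⟨measurable_weightedIndicator hA, measurable_weightedIndicator hB,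
      integrable_weightedIndicator hP hA, integrable_weightedIndicator hP hB, ?_⟩
    rw [integral_weightedIndicator hP hA, integral_weightedIndicator hP hB]
    exact le_trans le_measureReal_sdiff hgap
  · obtain ⟨j, hA, hB⟩ := hcover y
    exact ⟨j, weightedIndicator_mono hA, weightedIndicator_mono hB⟩

variable {Ω : Type*} [MeasurableSpace Ω] {μ : Measure Ω}

theorem ae_tendsto_iSup_abs_empiricalMean_weightedIndicator_Iic_sub {Z : ℕ → Ω → ℝ≥0 × ℝ}
    (hindep : Pairwise fun i j => IndepFun (Z i) (Z j) μ)
    (hident : ∀ i, IdentDistrib (Z i) (Z 0) μ μ)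
    (hP : Integrable (fun z => (z.1 : ℝ)) (μ.map (Z 0))) :
    ∀ᵐ ω ∂μ, Tendsto (fun n => ⨆ y, |empiricalMean Z (weightedIndicator (Iic y)) n ω -
      ∫ z, weightedIndicator (Iic y) z ∂μ.map (Z 0)|) atTop (𝓝 0) := by
  filter_upwards [ae_tendstoUniformly_empiricalMean_of_finiteBracketing hindep hident
    (fun y => integrable_weightedIndicator hP measurableSet_Iic)
    (finiteBracketing_weightedIndicator_Iic hP)] with ω hω
  exact tendsto_iSup_abs_sub_of_tendstoUniformly hω

end WeightedIndicator

theorem stmt_6_general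
    {𝒳 : Type*} [MeasurableSpace 𝒳]
    {Ω : Type*} [MeasurableSpace Ω] (μ : Measure Ω) [IsProbabilityMeasure μ]
    (δ : ℝ) (hδ : δ ∈ Set.Ioo (0 : ℝ) (1/2))
    (p : 𝒳 → ℝ) (hpm : Measurable p) (hp : ∀ x, δ ≤ p x ∧ p x ≤ 1 - δ)
    (X : ℕ → Ω → 𝒳) (T : ℕ → Ω → ℝ) (Y : ℕ → Ω → ℝ)
    (hXm : ∀ i, Measurable (X i)) (hTm : ∀ i, Measurable (T i)) (hYm : ∀ i, Measurable (Y i))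
    (hT01 : ∀ i ω, T i ω = 0 ∨ T i ω = 1)
    (hindep : iIndepFun
      (fun i ω => (X i ω, T i ω, Y i ω)) μ)
    (hident : ∀ i, IdentDistrib (fun ω => (X i ω, T i ω, Y i ω))
      (fun ω => (X 0 ω, T 0 ω, Y 0 ω)) μ μ)
    (F1 : ℝ → ℝ)
    (hF1 : ∀ y, F1 y = ∫ ω, (T 0 ω / p (X 0 ω)) * (if Y 0 ω ≤ y then (1 : ℝ) else 0) ∂μ)
    (Ftilde : ℕ → Ω → ℝ → ℝ)
    (hFtilde : ∀ n ω y, Ftilde n ω y = (1 / (n : ℝ)) * ∑ i ∈ Finset.range n,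
      (T i ω / p (X i ω)) * (if Y i ω ≤ y then (1 : ℝ) else 0)) :
    ∀ᵐ ω ∂μ, Tendsto (fun n : ℕ => ⨆ y : ℝ, |Ftilde n ω y - F1 y|) atTop (nhds 0) := by
  have hweight : ∀ i ω, 0 ≤ T i ω / p (X i ω) ∧ T i ω / p (X i ω) ≤ 1 / δ := fun i ω => by
    have hT : 0 ≤ T i ω ∧ T i ω ≤ 1 := by rcases hT01 i ω with h | h <;> simp [h]
    exact ⟨div_nonneg hT.1 (hδ.1.le.trans (hp _).1), div_le_div₀ zero_le_one hT.2 hδ.1 (hp _).1⟩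
  let φ : 𝒳 × ℝ × ℝ → ℝ≥0 × ℝ := fun v => ((v.2.1 / p v.1).toNNReal, v.2.2)
  have hφ : Measurable φ :=
    (measurable_snd.fst.div (hpm.comp measurable_fst)).real_toNNReal.prodMk measurable_snd.snd
  let Z : ℕ → Ω → ℝ≥0 × ℝ := fun i ω => φ (X i ω, T i ω, Y i ω)
  have hZ : Measurable (Z 0) := hφ.comp ((hXm 0).prodMk ((hTm 0).prodMk (hYm 0)))
  have hZ_apply : ∀ i ω y, weightedIndicator (Iic y) (Z i ω) =
      T i ω / p (X i ω) * if Y i ω ≤ y then 1 else 0 := fun i ω y =>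
    weightedIndicator_Iic_toNNReal (hweight i ω).1 _ _
  have hP : Integrable (fun z => (z.1 : ℝ)) (μ.map (Z 0)) := by
    refine (integrable_map_measure measurable_fst.coe_nnreal_real.aestronglyMeasurable
      hZ.aemeasurable).2 (.of_bound hZ.fst.coe_nnreal_real.aestronglyMeasurable (1 / δ)
        (ae_of_all _ fun ω => ?_))
    rw [Function.comp_apply, Real.norm_of_nonneg NNReal.zero_le_coe]
    exact (Real.coe_toNNReal _ (hweight 0 ω).1).trans_le (hweight 0 ω).2
  have hFtilde_eq : ∀ n ω y, Ftilde n ω y = empiricalMean Z (weightedIndicator (Iic y)) n ω := by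
    intro n ω y
    simp only [hFtilde, empiricalMean, hZ_apply, one_div_mul_eq_div]
  have hF1_eq : ∀ y, F1 y = ∫ z, weightedIndicator (Iic y) z ∂μ.map (Z 0) := by
    intro y
    rw [hF1, integral_map hZ.aemeasurable
      (measurable_weightedIndicator measurableSet_Iic).aestronglyMeasurable]
    simp only [hZ_apply]
  simpa only [hFtilde_eq, hF1_eq] using
    ae_tendsto_iSup_abs_empiricalMean_weightedIndicator_Iic_sub (Z := Z)
      (fun i j hij => (hindep.indepFun hij).comp hφ hφ) (fun i => (hident i).comp hφ) hP

/-- Glivenko–Cantelli theorem for the inverse-propensity weighted pseudo-empirical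
distribution function: `sup_y |F̃₁,ₙ(y) − F₁(y)| → 0` almost surely (`F₁` not assumed
continuous). -/
theorem stmt_6
    {𝒳 : Type*} [MetricSpace 𝒳] [CompactSpace 𝒳] [MeasurableSpace 𝒳] [BorelSpace 𝒳]
    {Ω : Type*} [MeasurableSpace Ω] (μ : Measure Ω) [IsProbabilityMeasure μ]
    (δ : ℝ) (hδ : δ ∈ Set.Ioo (0 : ℝ) (1/2))
    (p : 𝒳 → ℝ) (hpm : Measurable p) (hp : ∀ x, δ ≤ p x ∧ p x ≤ 1 - δ)
    (X : ℕ → Ω → 𝒳) (T : ℕ → Ω → ℝ) (Y : ℕ → Ω → ℝ)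
    (hXm : ∀ i, Measurable (X i)) (hTm : ∀ i, Measurable (T i)) (hYm : ∀ i, Measurable (Y i))
    (hT01 : ∀ i ω, T i ω = 0 ∨ T i ω = 1)
    (hindep : iIndepFun
      (fun i ω => (X i ω, T i ω, Y i ω)) μ)
    (hident : ∀ i, IdentDistrib (fun ω => (X i ω, T i ω, Y i ω))
      (fun ω => (X 0 ω, T 0 ω, Y 0 ω)) μ μ)
    (hcond : (fun ω => p (X 0 ω))
      =ᵐ[μ] μ[T 0 | MeasurableSpace.comap (X 0) inferInstance])
    (F1 : ℝ → ℝ)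
    (hF1 : ∀ y, F1 y = ∫ ω, (T 0 ω / p (X 0 ω)) * (if Y 0 ω ≤ y then (1 : ℝ) else 0) ∂μ)
    (Ftilde : ℕ → Ω → ℝ → ℝ)
    (hFtilde : ∀ n ω y, Ftilde n ω y = (1 / (n : ℝ)) * ∑ i ∈ Finset.range n,
      (T i ω / p (X i ω)) * (if Y i ω ≤ y then (1 : ℝ) else 0)) :
    ∀ᵐ ω ∂μ, Tendsto (fun n : ℕ => ⨆ y : ℝ, |Ftilde n ω y - F1 y|) atTop (nhds 0) :=
  stmt_6_general μ δ hδ p hpm hp X T Y hXm hTm hYm hT01 hindep hident F1 hF1 Ftilde hFtilde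
end
end

section
/- sup_{y ∈ ℝ} |F̂₁,ₙ(y) − F₁(y)| → 0 in probability as n → ∞; i.e., for every ε > 0, P( sup_y |F̂₁,ₙ(y) − F₁(y)| > ε ) → 0. -/
/-!
On the event where `p̂ₙ` is uniformly close to `p`, the Hájek weights `Tᵢ / p̂ₙ(Xᵢ)` are uniformly
close to the oracle weights `Zᵢ = Tᵢ / p(Xᵢ)`, so `F̂₁,ₙ(y)` is the ratio of two averages that are
close to the oracle averages `Gₙ(y) = n⁻¹ ∑ Zᵢ 1{Yᵢ ≤ y}` and `Kₙ = n⁻¹ ∑ Zᵢ`.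
Because `E[T | X] = p(X)`, `E Z = 1`, so `F₁` is the distribution function of a probability
measure. The Glivenko–Cantelli bracketing argument then controls `sup_y |Gₙ(y) - F₁(y)|` by the
errors at finitely many quantiles `tⱼ` of `F₁` (at levels `j ε`) and at their left limits;
at each of these points the strong law gives convergence in probability, and a union bound over
the finitely many bad events concludes.
-/

open MeasureTheory ProbabilityTheory Filter Finset Topology

theorem abs_mul_ite_le (a : ℝ) (P : Prop) [Decidable P] : |a * (if P then 1 else 0)| ≤ |a| := by
  split_ifs <;> simp

theorem ite_le_ite_of_imp {P Q : Prop} [Decidable P] [Decidable Q] (h : P → Q) :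
    (if P then (1 : ℝ) else 0) ≤ if Q then 1 else 0 := by
  split_ifs <;> simp_all

theorem div_mem_Icc_zero_inv {t p δ : ℝ} (ht : t ∈ Set.Icc 0 1) (hδ : 0 < δ) (hp : δ ≤ p) :
    t / p ∈ Set.Icc 0 δ⁻¹ :=
  ⟨div_nonneg ht.1 (hδ.le.trans hp), by rw [← one_div]; exact div_le_div₀ zero_le_one ht.2 hδ hp⟩

theorem abs_div_sub_div_le_s7 {t p q δ η : ℝ} (ht : |t| ≤ 1) (hδ : 0 < δ) (hp : δ ≤ p)
    (hpq : |q - p| ≤ η) (hη : η ≤ δ / 2) : |t / q - t / p| ≤ 2 * η / δ ^ 2 := by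
  have hη0 : 0 ≤ η := (abs_nonneg _).trans hpq
  have hq : δ / 2 ≤ q := by linarith [(abs_le.1 hpq).1]
  have hdiff : t / q - t / p = t * (p - q) / (q * p) := by
    rw [div_sub_div _ _ (by linarith) (by linarith)]
    ring
  rw [hdiff, abs_div, abs_of_pos (a := q * p) (by nlinarith), abs_mul, abs_sub_comm]
  calc |t| * |q - p| / (q * p) ≤ 1 * η / (δ / 2 * δ) := by
        gcongr
        linarith
    _ = 2 * η / δ ^ 2 := by field_simp

theorem Finset.abs_sum_mul_sub_sum_mul_le_s7 {ι : Type*} (s : Finset ι) {W Z u : ι → ℝ} {β : ℝ}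
    (hWZ : ∀ i ∈ s, |W i - Z i| ≤ β) (hu : ∀ i ∈ s, |u i| ≤ 1) :
    |∑ i ∈ s, W i * u i - ∑ i ∈ s, Z i * u i| ≤ #s * β := by
  rw [← sum_sub_distrib]
  calc |∑ i ∈ s, (W i * u i - Z i * u i)| ≤ ∑ i ∈ s, |W i - Z i| * |u i| := by
        simpa only [← sub_mul, abs_mul] using abs_sum_le_sum_abs (fun i => (W i - Z i) * u i) s
    _ ≤ ∑ _i ∈ s, β := sum_le_sum fun i hi =>
        (mul_le_of_le_one_right (abs_nonneg _) (hu i hi)).trans (hWZ i hi)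
    _ = #s * β := by rw [sum_const, nsmul_eq_mul]

theorem abs_div_sub_le_of_abs_sub_le_s7 {N D F a : ℝ} (hF0 : 0 ≤ F) (hF1 : F ≤ 1)
    (hN : |N - F| ≤ a) (hD : |D - 1| ≤ a) (ha : a ≤ 1 / 2) : |N / D - F| ≤ 4 * a := by
  have hD2 : 1 / 2 ≤ D := by linarith [(abs_le.1 hD).1]
  have hFD : |F * (1 - D)| ≤ a := by
    rw [abs_mul, abs_of_nonneg hF0, abs_sub_comm]
    exact (mul_le_of_le_one_left (abs_nonneg _) hF1).trans hD
  rw [show N / D - F = (N - F + F * (1 - D)) / D by field_simp; ring, abs_div,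
    abs_of_pos (a := D) (by linarith), div_le_iff₀ (by linarith)]
  nlinarith [abs_add_le (N - F) (F * (1 - D)), abs_nonneg (N - F)]

theorem abs_hajek_sub_le {n : ℕ} (hn : 0 < n) {W Z u : ℕ → ℝ} {β ε F : ℝ}
    (hWZ : ∀ i, |W i - Z i| ≤ β) (hu : ∀ i, |u i| ≤ 1) (hF0 : 0 ≤ F) (hF1 : F ≤ 1)
    (hG : |(∑ i ∈ range n, Z i * u i) / n - F| ≤ ε) (hK : |(∑ i ∈ range n, Z i) / n - 1| ≤ ε)
    (hβε : β + ε ≤ 1 / 2) :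
    |(∑ i ∈ range n, W i * u i) / ∑ i ∈ range n, W i - F| ≤ 4 * (β + ε) := by
  have hn' : (0 : ℝ) < n := Nat.cast_pos.2 hn
  have hmean : ∀ v : ℕ → ℝ, (∀ i, |v i| ≤ 1) →
      |(∑ i ∈ range n, W i * v i) / n - (∑ i ∈ range n, Z i * v i) / n| ≤ β := by
    intro v hv
    rw [← sub_div, abs_div, Nat.abs_cast, div_le_iff₀ hn', mul_comm]
    simpa using (range n).abs_sum_mul_sub_sum_mul_le_s7 (fun i _ => hWZ i) (fun i _ => hv i)
  have hN := hmean u hu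
  have hD := hmean 1 (by simp)
  simp only [Pi.one_apply, mul_one] at hD
  have key := abs_div_sub_le_of_abs_sub_le_s7 hF0 hF1
    ((abs_sub_le _ _ _).trans (add_le_add hN hG))
    ((abs_sub_le _ _ _).trans (add_le_add hD hK)) hβε
  rwa [div_div_div_cancel_right₀ hn'.ne'] at key

section Grid

variable {F Fm : ℝ → ℝ}

theorem exists_le_apply_iff_of_monotone (hmono : Monotone F)
    (htop : Tendsto F atTop (𝓝 1)) (hbot : Tendsto F atBot (𝓝 0))
    (hright : ∀ x, Tendsto F (𝓝[>] x) (𝓝 (F x))) (hleft : ∀ x, Tendsto F (𝓝[<] x) (𝓝 (Fm x)))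
    {c : ℝ} (hc0 : 0 < c) (hc1 : c < 1) :
    ∃ t, (∀ y, c ≤ F y ↔ t ≤ y) ∧ Fm t ≤ c := by
  set S := {y | c ≤ F y}
  obtain ⟨y₀, hy₀⟩ := (htop.eventually (eventually_gt_nhds hc1)).exists
  obtain ⟨M, hM⟩ := eventually_atBot.1 (hbot.eventually (eventually_lt_nhds hc0))
  have hne : S.Nonempty := ⟨y₀, hy₀.le⟩
  have hbdd : BddBelow S := ⟨M, fun y hy => le_of_not_gt fun hyM => (hM y hyM.le).not_ge hy⟩
  have hle : c ≤ F (sInf S) := by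
    refine ge_of_tendsto (hright _) (eventually_nhdsWithin_of_forall fun z hz => ?_)
    obtain ⟨y, hyS, hyz⟩ := (csInf_lt_iff hbdd hne).1 hz
    exact hyS.trans (hmono hyz.le)
  have hiff : ∀ y, c ≤ F y ↔ sInf S ≤ y :=
    fun y => ⟨fun hy => csInf_le hbdd hy, fun hy => hle.trans (hmono hy)⟩
  refine ⟨sInf S, hiff, le_of_tendsto (hleft _) (eventually_nhdsWithin_of_forall fun y hy => ?_)⟩
  exact (not_le.1 fun h => (not_le.2 (Set.mem_Iio.1 hy)) ((hiff y).1 h)).le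

theorem exists_finset_grid_of_monotone (hmono : Monotone F)
    (htop : Tendsto F atTop (𝓝 1)) (hbot : Tendsto F atBot (𝓝 0))
    (hright : ∀ x, Tendsto F (𝓝[>] x) (𝓝 (F x))) (hleft : ∀ x, Tendsto F (𝓝[<] x) (𝓝 (Fm x)))
    {ε : ℝ} (hε : 0 < ε) :
    ∃ s : Finset ℝ, (∀ y, F y ≤ ε ∨ ∃ a ∈ s, a ≤ y ∧ F y ≤ F a + ε) ∧
      (∀ y, 1 ≤ F y + ε ∨ ∃ b ∈ s, y < b ∧ Fm b ≤ F y + ε) := by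
  choose! t ht using fun (j : ℕ) (hj : 0 < j ∧ (j : ℝ) * ε < 1) =>
    exists_le_apply_iff_of_monotone hmono htop hbot hright hleft
      (mul_pos (Nat.cast_pos.2 hj.1) hε) hj.2
  have hmem : ∀ j : ℕ, 0 < j → (j : ℝ) * ε < 1 → t j ∈ (Ico 1 ⌈ε⁻¹⌉₊).image t := fun j hj hjε =>
    mem_image_of_mem t (mem_Ico.2 ⟨hj, Nat.lt_ceil.2 (by rwa [← one_div, lt_div_iff₀ hε])⟩)
  have hF0 : ∀ y, 0 ≤ F y := hmono.le_of_tendsto hbot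
  have hF1 : ∀ y, F y ≤ 1 := hmono.ge_of_tendsto htop
  refine ⟨(Ico 1 ⌈ε⁻¹⌉₊).image t, fun y => ?_, fun y => ?_⟩
  · rcases le_or_gt (F y) ε with hy | hy
    · exact .inl hy
    -- `j ε < F y ≤ (j + 1) ε`
    obtain ⟨j, hj⟩ : ∃ j, ⌈F y / ε⌉₊ = j + 1 :=
      ⟨⌈F y / ε⌉₊ - 1, by
        have : 1 < ⌈F y / ε⌉₊ := Nat.lt_ceil.2 (by rw [Nat.cast_one]; exact (one_lt_div hε).2 hy)
        omega⟩
    have hup := Nat.le_ceil (F y / ε)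
    have hlow := Nat.ceil_lt_add_one (div_nonneg (hF0 y) hε.le)
    rw [hj, Nat.cast_add_one, div_le_iff₀ hε] at hup
    rw [hj, Nat.cast_add_one, add_lt_add_iff_right, lt_div_iff₀ hε] at hlow
    have hj0 : 0 < j := Nat.pos_of_ne_zero fun h => by simp [h] at hup; linarith
    have htj := ht j ⟨hj0, hlow.trans_le (hF1 y)⟩
    exact .inr ⟨t j, hmem j hj0 (hlow.trans_le (hF1 y)), (htj.1 y).1 hlow.le,
      by linarith [(htj.1 (t j)).2 le_rfl]⟩
  · rcases le_or_gt 1 (F y + ε) with hy | hy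
    · exact .inl hy
    -- `F y < j ε ≤ F y + ε`
    set j := ⌊F y / ε⌋₊ + 1
    have hlow := Nat.lt_floor_add_one (F y / ε)
    have hup := Nat.floor_le (div_nonneg (hF0 y) hε.le)
    rw [div_lt_iff₀ hε, ← Nat.cast_add_one] at hlow
    rw [le_div_iff₀ hε] at hup
    have hjε : (j : ℝ) * ε ≤ F y + ε := by simp only [j]; push_cast; linarith
    have htj := ht j ⟨Nat.succ_pos _, by linarith⟩
    exact .inr ⟨t j, hmem j (Nat.succ_pos _) (by linarith),
      lt_of_not_ge fun h => hlow.not_ge ((htj.1 y).2 h), htj.2.trans hjε⟩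

theorem abs_sub_le_of_grid {G H : ℝ → ℝ} {s : Set ℝ} {K ε : ℝ} (hε : 0 ≤ ε)
    (hlow : ∀ y, F y ≤ ε ∨ ∃ a ∈ s, a ≤ y ∧ F y ≤ F a + ε)
    (hup : ∀ y, 1 ≤ F y + ε ∨ ∃ b ∈ s, y < b ∧ Fm b ≤ F y + ε)
    (hG : Monotone G) (hG0 : ∀ y, 0 ≤ G y) (hGH : ∀ y b, y < b → G y ≤ H b)
    (hGK : ∀ y, G y ≤ K) (hK : K ≤ 1 + ε)
    (hsG : ∀ a ∈ s, F a ≤ G a + ε) (hsH : ∀ b ∈ s, H b ≤ Fm b + ε) (y : ℝ) :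
    |G y - F y| ≤ 2 * ε := by
  rw [abs_le]
  constructor
  · rcases hlow y with h | ⟨a, ha, hay, h⟩
    · linarith [hG0 y]
    · linarith [hG hay, hsG a ha]
  · rcases hup y with h | ⟨b, hb, hyb, h⟩
    · linarith [hGK y]
    · linarith [hGH y b hyb, hsH b hb]

end Grid

theorem abs_average_mul_ite_sub_le {n : ℕ} {Z Y : ℕ → ℝ} (hZ : ∀ i, 0 ≤ Z i) {F Fm : ℝ → ℝ}
    {s : Set ℝ} {ε : ℝ} (hε : 0 ≤ ε)
    (hlow : ∀ y, F y ≤ ε ∨ ∃ a ∈ s, a ≤ y ∧ F y ≤ F a + ε)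
    (hup : ∀ y, 1 ≤ F y + ε ∨ ∃ b ∈ s, y < b ∧ Fm b ≤ F y + ε)
    (hK : (∑ i ∈ range n, Z i) / n ≤ 1 + ε)
    (hsG : ∀ a ∈ s, F a ≤ (∑ i ∈ range n, Z i * if Y i ≤ a then 1 else 0) / n + ε)
    (hsH : ∀ b ∈ s, (∑ i ∈ range n, Z i * if Y i < b then 1 else 0) / n ≤ Fm b + ε) (y : ℝ) :
    |(∑ i ∈ range n, Z i * if Y i ≤ y then 1 else 0) / n - F y| ≤ 2 * ε := by
  have hmono : ∀ u v : ℕ → ℝ, (∀ i, u i ≤ v i) →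
      (∑ i ∈ range n, Z i * u i) / n ≤ (∑ i ∈ range n, Z i * v i) / n := fun u v huv =>
    div_le_div_of_nonneg_right (sum_le_sum fun i _ => mul_le_mul_of_nonneg_left (huv i) (hZ i))
      n.cast_nonneg
  refine abs_sub_le_of_grid hε hlow hup (fun a b hab => hmono _ _ fun i =>
    ite_le_ite_of_imp fun h => h.trans hab) (fun y => ?_) (fun a b hab => hmono _ _ fun i =>
    ite_le_ite_of_imp fun h => h.trans_lt hab) (fun y => ?_) hK hsG hsH y
  · exact div_nonneg (sum_nonneg fun i _ => mul_nonneg (hZ i) (by split_ifs <;> simp))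
      n.cast_nonneg
  · simpa using hmono _ 1 fun i => (by split_ifs <;> simp : (if Y i ≤ y then (1 : ℝ) else 0) ≤ 1)

theorem iSup_abs_hajek_sub_le {𝒳 : Type*} [TopologicalSpace 𝒳] [CompactSpace 𝒳] {n : ℕ}
    (hn : 0 < n) {p q : C(𝒳, ℝ)} {δ ε : ℝ} (hδ : 0 < δ) (hδ1 : δ ≤ 1) (hp : ∀ x, δ ≤ p x)
    (hε : 0 ≤ ε) (hε6 : ε ≤ 1 / 6) (hpq : (⨆ x, |q x - p x|) ≤ δ ^ 2 * ε / 2)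
    {X : ℕ → 𝒳} {T Y : ℕ → ℝ} (hT : ∀ i, T i ∈ Set.Icc 0 1) {F Fm : ℝ → ℝ} {s : Set ℝ}
    (hlow : ∀ y, F y ≤ ε ∨ ∃ a ∈ s, a ≤ y ∧ F y ≤ F a + ε)
    (hup : ∀ y, 1 ≤ F y + ε ∨ ∃ b ∈ s, y < b ∧ Fm b ≤ F y + ε)
    (hF : ∀ y, 0 ≤ F y ∧ F y ≤ 1)
    (hK : |(∑ i ∈ range n, T i / p (X i)) / n - 1| ≤ ε)
    (hsG : ∀ a ∈ s, |(∑ i ∈ range n, T i / p (X i) * if Y i ≤ a then 1 else 0) / n - F a| ≤ ε)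
    (hsH : ∀ b ∈ s, |(∑ i ∈ range n, T i / p (X i) * if Y i < b then 1 else 0) / n - Fm b| ≤ ε) :
    (⨆ y, |∑ i ∈ range n, T i / q (X i) / (∑ k ∈ range n, T k / q (X k)) *
      (if Y i ≤ y then 1 else 0) - F y|) ≤ 12 * ε := by
  have hpq' : ∀ x, |q x - p x| ≤ δ ^ 2 * ε / 2 := fun x =>
    (le_ciSup (isCompact_range (q.continuous.sub p.continuous).abs).bddAbove x).trans hpq
  have hWZ : ∀ i, |T i / q (X i) - T i / p (X i)| ≤ ε := fun i =>
    (abs_div_sub_div_le_s7 (abs_le.2 ⟨by linarith [(hT i).1], (hT i).2⟩) hδ (hp _) (hpq' _)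
      (by nlinarith)).trans_eq (by field_simp)
  refine ciSup_le fun y => ?_
  simp only [div_mul_eq_mul_div _ (∑ k ∈ range n, T k / q (X k)), ← sum_div]
  have hG := abs_average_mul_ite_sub_le (fun i => div_nonneg (hT i).1 (hδ.le.trans (hp (X i))))
    hε hlow hup (sub_le_iff_le_add'.1 (abs_sub_le_iff.1 hK).1)
    (fun a ha => sub_le_iff_le_add'.1 (abs_sub_le_iff.1 (hsG a ha)).2)
    (fun b hb => sub_le_iff_le_add'.1 (abs_sub_le_iff.1 (hsH b hb)).1) y
  exact (abs_hajek_sub_le hn hWZ (fun i => by split_ifs <;> simp) (hF y).1 (hF y).2 hG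
    (hK.trans (by linarith)) (by linarith)).trans_eq (by ring)

section Probability

variable {Ω ι : Type*} [MeasurableSpace Ω] {μ : Measure Ω} {l : Filter ι}

theorem tendsto_measure_union_zero {A B : ι → Set Ω} (hA : Tendsto (fun i => μ (A i)) l (𝓝 0))
    (hB : Tendsto (fun i => μ (B i)) l (𝓝 0)) : Tendsto (fun i => μ (A i ∪ B i)) l (𝓝 0) :=
  tendsto_of_tendsto_of_tendsto_of_le_of_le tendsto_const_nhds (by simpa using hA.add hB)
    (fun _ => zero_le) fun _ => measure_union_le _ _

theorem tendsto_measure_biUnion_finset_zero {κ : Type*} (s : Finset κ) {A : κ → ι → Set Ω}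
    (hA : ∀ k ∈ s, Tendsto (fun i => μ (A k i)) l (𝓝 0)) :
    Tendsto (fun i => μ (⋃ k ∈ s, A k i)) l (𝓝 0) :=
  tendsto_of_tendsto_of_tendsto_of_le_of_le tendsto_const_nhds
    (by simpa using tendsto_finsetSum s hA) (fun _ => zero_le)
    fun _ => measure_biUnion_finset_le _ _

theorem tendsto_measure_le_abs_average_sub [IsFiniteMeasure μ] {β : Type*} [MeasurableSpace β]
    {V : ℕ → Ω → β} (hindep : iIndepFun V μ) (hident : ∀ i, IdentDistrib (V i) (V 0) μ μ)
    {f : β → ℝ} (hf : Measurable f) (hint : Integrable (fun ω => f (V 0 ω)) μ) {ε : ℝ}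
    (hε : 0 < ε) :
    Tendsto (fun n : ℕ => μ {ω | ε ≤ |(∑ i ∈ range n, f (V i ω)) / n - ∫ ω, f (V 0 ω) ∂μ|})
      atTop (𝓝 0) := by
  have hident' : ∀ i, IdentDistrib (fun ω => f (V i ω)) (fun ω => f (V 0 ω)) μ μ :=
    fun i => (hident i).comp hf
  have hslln := strong_law_ae_real (fun i ω => f (V i ω)) hint
    (fun i j hij => (hindep.comp (fun _ => f) (fun _ => hf)).indepFun hij) hident'
  have hmeas : ∀ n : ℕ, AEStronglyMeasurable (fun ω => (∑ i ∈ range n, f (V i ω)) / n) μ :=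
    fun n => ((range n).aemeasurable_fun_sum fun i _ =>
      (hident' i).aemeasurable_fst).div_const _ |>.aestronglyMeasurable
  simpa [Real.norm_eq_abs] using
    tendstoInMeasure_iff_norm.1 (tendstoInMeasure_of_tendsto_ae hmeas hslln) ε hε

theorem integral_div_eq_one_of_condExp {𝒳 : Type*} [MeasurableSpace 𝒳] [IsProbabilityMeasure μ]
    {p : 𝒳 → ℝ} (hpm : Measurable p) (hp : ∀ x, 0 < p x) {X : Ω → 𝒳} {T : Ω → ℝ}
    (hX : Measurable X) (hT : Integrable T μ) (hTp : Integrable (fun ω => T ω / p (X ω)) μ)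
    (hcond : (fun ω => p (X ω)) =ᵐ[μ] μ[T | MeasurableSpace.comap X inferInstance]) :
    ∫ ω, T ω / p (X ω) ∂μ = 1 := by
  have hm := hX.comap_le
  have hg : StronglyMeasurable[MeasurableSpace.comap X inferInstance] fun ω => (p (X ω))⁻¹ :=
    (hpm.inv.comp (Measurable.of_comap_le le_rfl)).stronglyMeasurable
  have hTp' : (fun ω => T ω / p (X ω)) = (fun ω => (p (X ω))⁻¹) * T := by
    ext ω
    exact div_eq_inv_mul _ _
  rw [hTp'] at hTp ⊢
  calc ∫ ω, ((fun ω => (p (X ω))⁻¹) * T) ω ∂μ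
      = ∫ ω, ((fun ω => (p (X ω))⁻¹) * μ[T | MeasurableSpace.comap X inferInstance]) ω ∂μ := by
        rw [← integral_condExp hm]
        exact integral_congr_ae (condExp_mul_of_stronglyMeasurable_left hg hTp hT)
    _ = ∫ _ω, (1 : ℝ) ∂μ := by
        refine integral_congr_ae ?_
        filter_upwards [hcond] with ω hω
        simp [← hω, (hp (X ω)).ne']
    _ = 1 := by simp

end Probability

section WeightedCdf

variable {Ω : Type*} [MeasurableSpace Ω] {μ : Measure Ω} {w Y : Ω → ℝ}

noncomputable def weightedCdf (μ : Measure Ω) (w Y : Ω → ℝ) (y : ℝ) : ℝ :=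
  ∫ ω, w ω * (if Y ω ≤ y then 1 else 0) ∂μ

theorem integrable_mul_ite (hw : Integrable w μ) {P : Ω → Prop} [DecidablePred P]
    (hP : MeasurableSet {ω | P ω}) : Integrable (fun ω => w ω * if P ω then 1 else 0) μ :=
  hw.mono (hw.aestronglyMeasurable.mul
    (Measurable.ite hP measurable_const measurable_const).aestronglyMeasurable)
    (ae_of_all _ fun ω => by simpa only [Real.norm_eq_abs] using abs_mul_ite_le (w ω) (P ω))

theorem tendsto_weightedCdf {l : Filter ℝ} [l.IsCountablyGenerated] (hw : Integrable w μ)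
    (hY : Measurable Y) {P : Ω → Prop} [DecidablePred P]
    (hP : ∀ ω, ∀ᶠ y in l, Y ω ≤ y ↔ P ω) :
    Tendsto (weightedCdf μ w Y) l (𝓝 (∫ ω, w ω * (if P ω then 1 else 0) ∂μ)) := by
  refine tendsto_integral_filter_of_dominated_convergence (fun ω => |w ω|)
    (Eventually.of_forall fun y => (integrable_mul_ite hw
      (measurableSet_le hY measurable_const)).aestronglyMeasurable)
    (Eventually.of_forall fun y => ae_of_all _ fun ω => abs_mul_ite_le _ _) hw.abs
    (ae_of_all _ fun ω => tendsto_const_nhds.congr' ?_)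
  filter_upwards [hP ω] with y hy
  simp only [hy]

theorem weightedCdf_monotone (hw : Integrable w μ) (hw0 : ∀ ω, 0 ≤ w ω) (hY : Measurable Y) :
    Monotone (weightedCdf μ w Y) := fun _ _ hab =>
  integral_mono (integrable_mul_ite hw (measurableSet_le hY measurable_const))
    (integrable_mul_ite hw (measurableSet_le hY measurable_const)) fun ω =>
    mul_le_mul_of_nonneg_left (ite_le_ite_of_imp fun h => h.trans hab) (hw0 ω)

theorem weightedCdf_nonneg (hw0 : ∀ ω, 0 ≤ w ω) (y : ℝ) : 0 ≤ weightedCdf μ w Y y :=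
  integral_nonneg fun ω => mul_nonneg (hw0 ω) (by split_ifs <;> simp)

theorem tendsto_weightedCdf_atTop (hw : Integrable w μ) (hY : Measurable Y) :
    Tendsto (weightedCdf μ w Y) atTop (𝓝 (∫ ω, w ω ∂μ)) := by
  simpa using tendsto_weightedCdf (P := fun _ => True) hw hY fun ω =>
    (eventually_ge_atTop (Y ω)).mono fun y hy => iff_true_intro hy

theorem weightedCdf_le_integral (hw : Integrable w μ) (hw0 : ∀ ω, 0 ≤ w ω) (hY : Measurable Y)
    (y : ℝ) : weightedCdf μ w Y y ≤ ∫ ω, w ω ∂μ :=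
  (weightedCdf_monotone hw hw0 hY).ge_of_tendsto (tendsto_weightedCdf_atTop hw hY) y

theorem exists_finset_grid_weightedCdf (hw : Integrable w μ) (hw0 : ∀ ω, 0 ≤ w ω)
    (hw1 : ∫ ω, w ω ∂μ = 1) (hY : Measurable Y) {ε : ℝ} (hε : 0 < ε) :
    ∃ s : Finset ℝ,
      (∀ y, weightedCdf μ w Y y ≤ ε ∨
        ∃ a ∈ s, a ≤ y ∧ weightedCdf μ w Y y ≤ weightedCdf μ w Y a + ε) ∧
      (∀ y, 1 ≤ weightedCdf μ w Y y + ε ∨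
        ∃ b ∈ s, y < b ∧ ∫ ω, w ω * (if Y ω < b then 1 else 0) ∂μ ≤ weightedCdf μ w Y y + ε) := by
  refine exists_finset_grid_of_monotone (weightedCdf_monotone hw hw0 hY)
    (hw1 ▸ tendsto_weightedCdf_atTop hw hY) ?_ (fun x => ?_) (fun x => ?_) hε
  · simpa using tendsto_weightedCdf (P := fun _ => False) hw hY fun ω =>
      (eventually_lt_atBot (Y ω)).mono fun y hy => iff_false_intro hy.not_ge
  · refine tendsto_weightedCdf hw hY fun ω => ?_
    rcases le_or_gt (Y ω) x with h | h
    · exact eventually_nhdsWithin_of_forall fun y hy => iff_of_true (h.trans (le_of_lt hy)) h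
    · filter_upwards [nhdsWithin_le_nhds (eventually_lt_nhds h)] with y hy
      exact iff_of_false hy.not_ge h.not_ge
  · refine tendsto_weightedCdf hw hY fun ω => ?_
    rcases lt_or_ge (Y ω) x with h | h
    · filter_upwards [nhdsWithin_le_nhds (eventually_gt_nhds h)] with y hy
      exact iff_of_true hy.le h
    · exact eventually_nhdsWithin_of_forall fun y hy =>
        iff_of_false (fun h' => (h'.trans_lt hy).not_ge h) h.not_gt

theorem tendsto_measure_le_abs_average_ipw_sub [IsFiniteMeasure μ] {𝒳 : Type*}
    [MeasurableSpace 𝒳] {p : 𝒳 → ℝ} (hp : Measurable p) {X : ℕ → Ω → 𝒳} {T Y : ℕ → Ω → ℝ}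
    (hY : Measurable (Y 0)) (hindep : iIndepFun (fun i ω => (X i ω, T i ω, Y i ω)) μ)
    (hident : ∀ i, IdentDistrib (fun ω => (X i ω, T i ω, Y i ω))
      (fun ω => (X 0 ω, T 0 ω, Y 0 ω)) μ μ)
    (hw : Integrable (fun ω => T 0 ω / p (X 0 ω)) μ) {P : ℝ → Prop} [DecidablePred P]
    (hP : MeasurableSet {y | P y}) {ε : ℝ} (hε : 0 < ε) :
    Tendsto (fun n : ℕ => μ {ω | ε ≤ |(∑ i ∈ range n, T i ω / p (X i ω) *
      (if P (Y i ω) then 1 else 0)) / n -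
        ∫ ω, T 0 ω / p (X 0 ω) * (if P (Y 0 ω) then 1 else 0) ∂μ|}) atTop (𝓝 0) :=
  tendsto_measure_le_abs_average_sub hindep hident
    (f := fun b => b.2.1 / p b.1 * if P b.2.2 then 1 else 0)
    ((measurable_snd.fst.div (hp.comp measurable_fst)).mul
      (Measurable.ite (measurable_snd.snd hP) measurable_const measurable_const))
    (integrable_mul_ite hw (hY hP)) hε

end WeightedCdf

theorem stmt_7_general
    {𝒳 : Type*} [MetricSpace 𝒳] [CompactSpace 𝒳] [MeasurableSpace 𝒳] [BorelSpace 𝒳]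
    {Ω : Type*} [MeasurableSpace Ω] (μ : Measure Ω) [IsProbabilityMeasure μ]
    (δ : ℝ) (hδ : δ ∈ Set.Ioo (0 : ℝ) (1/2))
    (p : C(𝒳, ℝ)) (hp : ∀ x, δ ≤ p x ∧ p x ≤ 1 - δ)
    (X : ℕ → Ω → 𝒳) (T : ℕ → Ω → ℝ) (Y : ℕ → Ω → ℝ)
    (hXm : ∀ i, Measurable (X i)) (hTm : ∀ i, Measurable (T i)) (hYm : ∀ i, Measurable (Y i))
    (hT01 : ∀ i ω, T i ω = 0 ∨ T i ω = 1)
    (hindep : iIndepFun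
      (fun i ω => (X i ω, T i ω, Y i ω)) μ)
    (hident : ∀ i, IdentDistrib (fun ω => (X i ω, T i ω, Y i ω))
      (fun ω => (X 0 ω, T 0 ω, Y 0 ω)) μ μ)
    (hcond : (fun ω => p (X 0 ω))
      =ᵐ[μ] μ[T 0 | MeasurableSpace.comap (X 0) inferInstance])
    (phat : ℕ → Ω → C(𝒳, ℝ))
    (hconv : ∀ ε > (0 : ℝ),
      Tendsto (fun n => μ {ω | (⨆ x, |phat n ω x - p x|) > ε}) atTop (nhds 0))
    (F1 : ℝ → ℝ)
    (hF1 : ∀ y, F1 y = ∫ ω, (T 0 ω / p (X 0 ω)) * (if Y 0 ω ≤ y then (1 : ℝ) else 0) ∂μ)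
    (Fhat : ℕ → Ω → ℝ → ℝ)
    (hFhat : ∀ n ω y, Fhat n ω y = ∑ i ∈ Finset.range n,
      ((T i ω / phat n ω (X i ω)) / ∑ k ∈ Finset.range n, T k ω / phat n ω (X k ω)) *
        (if Y i ω ≤ y then (1 : ℝ) else 0)) :
    ∀ ε > (0 : ℝ),
      Tendsto (fun n : ℕ => μ {ω | (⨆ y : ℝ, |Fhat n ω y - F1 y|) > ε})
        atTop (nhds 0) := by
  intro ε hε
  obtain ⟨ε₂, hε₂, hε₂ε, hε₂6⟩ : ∃ ε₂ > 0, 12 * ε₂ < ε ∧ ε₂ ≤ 1 / 6 :=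
    ⟨min (ε / 24) (1 / 6), by positivity, by linarith [min_le_left (ε / 24) (1 / 6)],
      min_le_right _ _⟩
  have hT : ∀ i ω, T i ω ∈ Set.Icc (0 : ℝ) 1 := fun i ω => by
    rcases hT01 i ω with h | h <;> simp [h]
  have hw : ∀ ω, T 0 ω / p (X 0 ω) ∈ Set.Icc 0 δ⁻¹ := fun ω =>
    div_mem_Icc_zero_inv (hT 0 ω) hδ.1 (hp _).1
  have hw_int : Integrable (fun ω => T 0 ω / p (X 0 ω)) μ := .of_mem_Icc 0 δ⁻¹
    ((hTm 0).div (p.continuous.measurable.comp (hXm 0))).aemeasurable (ae_of_all _ hw)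
  have hw1 := integral_div_eq_one_of_condExp p.continuous.measurable
    (fun x => hδ.1.trans_le (hp x).1) (hXm 0)
    (.of_mem_Icc 0 1 (hTm 0).aemeasurable (ae_of_all _ (hT 0))) hw_int hcond
  obtain rfl : F1 = weightedCdf μ (fun ω => T 0 ω / p (X 0 ω)) (Y 0) := funext hF1
  obtain ⟨s, hlow, hup⟩ := exists_finset_grid_weightedCdf hw_int (fun ω => (hw ω).1) hw1 (hYm 0) hε₂
  have hslln := fun {P : ℝ → Prop} [DecidablePred P] (hP : MeasurableSet {y | P y}) =>
    tendsto_measure_le_abs_average_ipw_sub p.continuous.measurable (hYm 0) hindep hident hw_int hP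
      hε₂
  have hbad := tendsto_measure_union_zero
    (tendsto_measure_union_zero (hconv _ (div_pos (mul_pos (pow_pos hδ.1 2) hε₂) two_pos))
      (by simpa [hw1] using hslln (P := fun _ => True) MeasurableSet.univ))
    (tendsto_measure_biUnion_finset_zero s fun a _ => tendsto_measure_union_zero
      (hslln (P := (· ≤ a)) measurableSet_Iic) (hslln (P := (· < a)) measurableSet_Iio))
  obtain rfl : Fhat = _ := funext fun n => funext fun ω => funext (hFhat n ω)
  refine tendsto_of_tendsto_of_tendsto_of_le_of_le' tendsto_const_nhds hbad
    (.of_forall fun _ => zero_le) ((eventually_gt_atTop 0).mono fun n hn =>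
      measure_mono fun ω hω => ?_)
  by_contra hgood
  simp only [Set.mem_union, Set.mem_iUnion, Set.mem_ofPred_eq, not_or, not_exists, not_le,
    not_lt] at hgood
  obtain ⟨⟨hq, hK⟩, hs⟩ := hgood
  have key := iSup_abs_hajek_sub_le hn hδ.1 (by linarith [hδ.2]) (fun x => (hp x).1) hε₂.le hε₂6
    hq (fun i => hT i ω) hlow hup
    (fun y => ⟨weightedCdf_nonneg (fun ω => (hw ω).1) y,
      hw1 ▸ weightedCdf_le_integral hw_int (fun ω => (hw ω).1) (hYm 0) y⟩)
    hK.le (fun a ha => (hs a ha).1.le) (fun a ha => (hs a ha).2.le)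
  exact (lt_irrefl _) ((hω.trans_le key).trans hε₂ε)

/-- Uniform consistency in probability of the Hájek-type estimator:
`sup_y |F̂₁,ₙ(y) − F₁(y)| → 0` in probability. -/
theorem stmt_7
    {𝒳 : Type*} [MetricSpace 𝒳] [CompactSpace 𝒳] [MeasurableSpace 𝒳] [BorelSpace 𝒳]
    {Ω : Type*} [MeasurableSpace Ω] (μ : Measure Ω) [IsProbabilityMeasure μ]
    (δ : ℝ) (hδ : δ ∈ Set.Ioo (0 : ℝ) (1/2))
    (p : C(𝒳, ℝ)) (hp : ∀ x, δ ≤ p x ∧ p x ≤ 1 - δ)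
    (X : ℕ → Ω → 𝒳) (T : ℕ → Ω → ℝ) (Y : ℕ → Ω → ℝ)
    (hXm : ∀ i, Measurable (X i)) (hTm : ∀ i, Measurable (T i)) (hYm : ∀ i, Measurable (Y i))
    (hT01 : ∀ i ω, T i ω = 0 ∨ T i ω = 1)
    (hindep : iIndepFun
      (fun i ω => (X i ω, T i ω, Y i ω)) μ)
    (hident : ∀ i, IdentDistrib (fun ω => (X i ω, T i ω, Y i ω))
      (fun ω => (X 0 ω, T 0 ω, Y 0 ω)) μ μ)
    (hcond : (fun ω => p (X 0 ω))
      =ᵐ[μ] μ[T 0 | MeasurableSpace.comap (X 0) inferInstance])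
    [MeasurableSpace C(𝒳, ℝ)] [BorelSpace C(𝒳, ℝ)]
    (phat : ℕ → Ω → C(𝒳, ℝ)) (hmeas : ∀ n, Measurable (phat n))
    (hconv : ∀ ε > (0 : ℝ),
      Tendsto (fun n => μ {ω | (⨆ x, |phat n ω x - p x|) > ε}) atTop (nhds 0))
    (F1 : ℝ → ℝ)
    (hF1 : ∀ y, F1 y = ∫ ω, (T 0 ω / p (X 0 ω)) * (if Y 0 ω ≤ y then (1 : ℝ) else 0) ∂μ)
    (Fhat : ℕ → Ω → ℝ → ℝ)
    (hFhat : ∀ n ω y, Fhat n ω y = ∑ i ∈ Finset.range n,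
      ((T i ω / phat n ω (X i ω)) / ∑ k ∈ Finset.range n, T k ω / phat n ω (X k ω)) *
        (if Y i ω ≤ y then (1 : ℝ) else 0)) :
    ∀ ε > (0 : ℝ),
      Tendsto (fun n : ℕ => μ {ω | (⨆ y : ℝ, |Fhat n ω y - F1 y|) > ε})
        atTop (nhds 0) :=
  stmt_7_general μ δ hδ p hp X T Y hXm hTm hYm hT01 hindep hident hcond phat hconv F1 hF1 Fhat hFhat
end

section
/- If F is a continuous cumulative distribution function on ℝ, then ∫_ℝ F dμ_F = 1/2. -/
/-!
The probability integral transform: for a continuous cdf `F`, the push-forward of `μ_F` under `F`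
is the uniform distribution on `[0, 1]`, because `{F ≤ F x}` is a half-line `(-∞, m]` with
`F m = F x`. Hence `∫ F dμ_F = ∫₀¹ t dt = 1/2`.
-/

open MeasureTheory Filter Set

theorem Monotone.exists_preimage_Iic_eq_Iic {α β : Type*} [ConditionallyCompleteLinearOrder α]
    [TopologicalSpace α] [OrderTopology α] [PartialOrder β] [TopologicalSpace β]
    [ClosedIicTopology β] {f : α → β} (hf : Monotone f) (hcont : Continuous f) {x : α}
    (hbdd : BddAbove (f ⁻¹' Iic (f x))) :
    ∃ m, f ⁻¹' Iic (f x) = Iic m ∧ f m = f x := by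
  set s := f ⁻¹' Iic (f x)
  have hxs : x ∈ s := le_refl (f x)
  have hms : sSup s ∈ s := (isClosed_Iic.preimage hcont).csSup_mem ⟨x, hxs⟩ hbdd
  refine ⟨sSup s, Subset.antisymm (fun y hy => le_csSup hbdd hy)
    (fun y hy => (hf hy).trans hms), le_antisymm hms (hf (le_csSup hbdd hxs))⟩

namespace StieltjesFunction

variable {F : StieltjesFunction ℝ}

theorem le_one_of_tendsto_atTop (htop : Tendsto F atTop (nhds 1)) (y : ℝ) : F y ≤ 1 :=
  ge_of_tendsto htop (eventually_atTop.2 ⟨y, fun _ hz => F.mono hz⟩)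

theorem measure_preimage_Iic_of_continuous (hcont : Continuous F)
    (hbot : Tendsto F atBot (nhds 0)) (htop : Tendsto F atTop (nhds 1)) (a : ℝ) :
    F.measure (F ⁻¹' Iic a) = ENNReal.ofReal (min 1 a) := by
  rcases le_or_gt 1 a with ha1 | ha1
  · have huniv : F ⁻¹' Iic a = univ :=
      eq_univ_of_forall fun y => (le_one_of_tendsto_atTop htop y).trans ha1
    have := F.isProbabilityMeasure hbot htop
    simp [huniv, min_eq_left ha1]
  by_cases hrange : a ∈ range F
  · obtain ⟨x, rfl⟩ := hrange
    have hbdd : BddAbove (F ⁻¹' Iic (F x)) := by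
      obtain ⟨z, hz⟩ := (htop.eventually (eventually_gt_nhds ha1)).exists
      exact ⟨z, fun y hy => le_of_not_gt fun hzy => (F.mono hzy.le).not_gt (hy.trans_lt hz)⟩
    obtain ⟨m, hm, hFm⟩ := F.mono.exists_preimage_Iic_eq_Iic hcont hbdd
    rw [hm, F.measure_Iic hbot, hFm, sub_zero, min_eq_right ha1.le]
  · -- a point with `F y ≤ a < 1` would put `a` in the range, by the intermediate value theorem
    have hempty : F ⁻¹' Iic a = ∅ := eq_empty_of_forall_notMem fun y hy =>
      hrange (mem_range_of_exists_le_of_exists_ge hcont ⟨y, hy⟩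
        ((htop.eventually (eventually_gt_nhds ha1)).exists.imp fun _ => le_of_lt))
    have ha : a ≤ 0 := by
      by_contra! ha
      obtain ⟨y, hy⟩ := (hbot.eventually (eventually_lt_nhds ha)).exists
      exact hempty.subset (show y ∈ F ⁻¹' Iic a from hy.le)
    simp [hempty, ENNReal.ofReal_eq_zero.2 ((min_le_right 1 a).trans ha)]

theorem map_measure_eq_restrict_Ioc (hcont : Continuous F)
    (hbot : Tendsto F atBot (nhds 0)) (htop : Tendsto F atTop (nhds 1)) :
    F.measure.map F = volume.restrict (Ioc 0 1) := by
  have := F.isProbabilityMeasure hbot htop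
  refine Measure.ext_of_Iic _ _ fun a => ?_
  rw [Measure.map_apply hcont.measurable measurableSet_Iic,
    Measure.restrict_apply measurableSet_Iic, inter_comm, Ioc_inter_Iic, Real.volume_Ioc,
    sub_zero, measure_preimage_Iic_of_continuous hcont hbot htop]

end StieltjesFunction

/-- If `F` is a continuous cumulative distribution function on `ℝ`, then
`∫_ℝ F dμ_F = 1/2`, where `μ_F` is the Lebesgue–Stieltjes measure of `F`. -/
theorem stmt_8
    (F : StieltjesFunction ℝ)
    (hcont : Continuous F)
    (hbot : Tendsto F atBot (nhds 0))
    (htop : Tendsto F atTop (nhds 1)) :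
    ∫ y, F y ∂F.measure = 1/2 := by
  calc ∫ y, F y ∂F.measure = ∫ t, t ∂(F.measure.map F) :=
        (integral_map hcont.aemeasurable aestronglyMeasurable_id).symm
    _ = ∫ t in (0 : ℝ)..1, t := by
        rw [F.map_measure_eq_restrict_Ioc hcont hbot htop,
          intervalIntegral.integral_of_le zero_le_one]
    _ = 1/2 := by norm_num [integral_id]
end

section
/- For all real y and t, E[Z₁(y)·Z₁(t)] = E[(1/p)·(G₁(min(y,t)) − G₁(y)·G₁(t))] + E[(G₁(y) − F₁(y))·(G₁(t) − F₁(t))], where G₁(min(y,t)) is a version of E[1{Y₍₁₎ ≤ min(y,t)} | m]. -/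
open MeasureTheory ProbabilityTheory

/-- bounded a.e.-measurable functions are integrable -/
lemma my_integrable_of_bdd {Ω : Type*} {m0 : MeasurableSpace Ω} {μ : Measure Ω}
    [IsProbabilityMeasure μ] {f : Ω → ℝ} (hf : AEStronglyMeasurable f μ) {C : ℝ}
    (h : ∀ᵐ ω ∂μ, |f ω| ≤ C) : Integrable f μ :=
  ⟨hf, HasFiniteIntegral.of_bounded (C := C) (by simpa [Real.norm_eq_abs] using h)⟩

/-- convenient bundled boundedness predicate -/
def MyBdd {Ω : Type*} {m0 : MeasurableSpace Ω} (μ : Measure Ω) (f : Ω → ℝ) : Prop :=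
  AEStronglyMeasurable f μ ∧ ∃ C, ∀ᵐ ω ∂μ, |f ω| ≤ C

namespace MyBdd

variable {Ω : Type*} {m0 : MeasurableSpace Ω} {μ : Measure Ω} {f g : Ω → ℝ}

lemma integrable [IsProbabilityMeasure μ] (h : MyBdd μ f) : Integrable f μ := by
  obtain ⟨hm, C, hC⟩ := h
  exact my_integrable_of_bdd hm hC

lemma mul (hf : MyBdd μ f) (hg : MyBdd μ g) : MyBdd μ (fun ω => f ω * g ω) := by
  obtain ⟨hfm, C, hC⟩ := hf
  obtain ⟨hgm, D, hD⟩ := hg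
  refine ⟨hfm.mul hgm, |C| * |D|, ?_⟩
  filter_upwards [hC, hD] with ω h1 h2
  rw [abs_mul]
  exact mul_le_mul (h1.trans (le_abs_self C)) (h2.trans (le_abs_self D)) (abs_nonneg _)
    (abs_nonneg _)

lemma add (hf : MyBdd μ f) (hg : MyBdd μ g) : MyBdd μ (fun ω => f ω + g ω) := by
  obtain ⟨hfm, C, hC⟩ := hf
  obtain ⟨hgm, D, hD⟩ := hg
  refine ⟨hfm.add hgm, C + D, ?_⟩
  filter_upwards [hC, hD] with ω h1 h2
  exact (abs_add_le _ _).trans (add_le_add h1 h2)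

lemma neg (hf : MyBdd μ f) : MyBdd μ (fun ω => -f ω) := by
  obtain ⟨hfm, C, hC⟩ := hf
  exact ⟨hfm.neg, C, by filter_upwards [hC] with ω h1; rwa [abs_neg]⟩

lemma sub (hf : MyBdd μ f) (hg : MyBdd μ g) : MyBdd μ (fun ω => f ω - g ω) := by
  simpa [sub_eq_add_neg] using hf.add hg.neg

lemma const (c : ℝ) : MyBdd μ (fun _ => c) :=
  ⟨aestronglyMeasurable_const, |c|, Filter.Eventually.of_forall fun _ => by simp⟩

end MyBdd

/-- the key conditioning identity : for `s` bounded `m`-measurable,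
`∫ s·W = ∫ s·V` when `V` is a version of `E[W|m]`. -/
lemma my_cond_int {Ω : Type*} {m0 : MeasurableSpace Ω} {μ : Measure Ω}
    [IsProbabilityMeasure μ] {m : MeasurableSpace Ω} (hm : m ≤ m0)
    (W V s : Ω → ℝ) (hW : Integrable W μ) (hV : μ[W|m] =ᵐ[μ] V)
    (hs : StronglyMeasurable[m] s) (hsW : Integrable (fun ω => s ω * W ω) μ) :
    ∫ ω, s ω * W ω ∂μ = ∫ ω, s ω * V ω ∂μ := by
  have h1 : μ[fun ω => s ω * W ω|m] =ᵐ[μ] fun ω => s ω * V ω := by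
    have h2 := condExp_mul_of_stronglyMeasurable_left hs (by exact hsW) hW
    refine h2.trans ?_
    filter_upwards [hV] with ω hω
    simp only [Pi.mul_apply, hω]
  calc ∫ ω, s ω * W ω ∂μ
      = ∫ ω, (μ[fun ω => s ω * W ω|m]) ω ∂μ :=
        (integral_condExp (μ := μ) (f := fun ω => s ω * W ω) hm).symm
  _ = ∫ ω, s ω * V ω ∂μ := integral_congr_ae h1

set_option maxHeartbeats 1000000 in
/-- Covariance kernel of the influence function `Z₁`: for all real `y` and `t`,
`E[Z₁(y)·Z₁(t)] = E[(1/p)·(G₁(min(y,t)) − G₁(y)·G₁(t))] + E[(G₁(y) − F₁(y))·(G₁(t) − F₁(t))]`. -/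
theorem stmt_12
    {Ω : Type*} [MeasurableSpace Ω] [StandardBorelSpace Ω]
    {𝒳 : Type*} [MeasurableSpace 𝒳] [StandardBorelSpace 𝒳]
    (μ : Measure Ω) [IsProbabilityMeasure μ]
    (X : Ω → 𝒳) (T : Ω → ℝ) (Y1 Y0 : Ω → ℝ)
    (hX : Measurable X) (hT : Measurable T) (hY1 : Measurable Y1) (hY0 : Measurable Y0)
    (hT01 : ∀ ω, T ω = 0 ∨ T ω = 1)
    (Y : Ω → ℝ) (hY : ∀ ω, Y ω = T ω * Y1 ω + (1 - T ω) * Y0 ω)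
    (p : Ω → ℝ)
    (hp : p =ᵐ[μ] μ[T | MeasurableSpace.comap X inferInstance])
    (δ : ℝ) (hδ : δ ∈ Set.Ioo (0 : ℝ) (1/2))
    (hpδ : ∀ᵐ ω ∂μ, δ ≤ p ω ∧ p ω ≤ 1 - δ)
    (hindep : CondIndepFun (MeasurableSpace.comap X inferInstance) hX.comap_le
      (fun ω => (Y1 ω, Y0 ω)) T μ)
    (F1 : ℝ → ℝ) (hF1 : ∀ y, F1 y = (μ {ω | Y1 ω ≤ y}).toReal)
    (G1 : ℝ → Ω → ℝ)
    (hG1 : ∀ y, G1 y =ᵐ[μ]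
      μ[fun ω => if Y1 ω ≤ y then (1 : ℝ) else 0 | MeasurableSpace.comap X inferInstance])
    (Z1 : ℝ → Ω → ℝ)
    (hZ1 : ∀ y ω, Z1 y ω = (T ω / p ω) * (if Y ω ≤ y then (1 : ℝ) else 0) - F1 y
      - (G1 y ω / p ω) * (T ω - p ω))
    (y t : ℝ) :
    ∫ ω, Z1 y ω * Z1 t ω ∂μ =
      (∫ ω, (1 / p ω) * (G1 (min y t) ω - G1 y ω * G1 t ω) ∂μ)
        + ∫ ω, (G1 y ω - F1 y) * (G1 t ω - F1 t) ∂μ := by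
  classical
  have hm : MeasurableSpace.comap X inferInstance ≤ (inferInstance : MeasurableSpace Ω) :=
    hX.comap_le
  set A : ℝ → Ω → ℝ := fun y' ω => if Y1 ω ≤ y' then (1:ℝ) else 0 with hAdef
  -- facts needing the ambient instance, established before introducing `m` into context
  have hAm : ∀ y', Measurable (A y') := fun y' =>
    Measurable.ite (measurableSet_le hY1 measurable_const) measurable_const measurable_const
  have hAbd : ∀ y' ω, |A y' ω| ≤ 1 := by
    intro y' ω; simp only [hAdef]; split <;> norm_num
  have hTbd : ∀ ω, |T ω| ≤ 1 := by
    intro ω; rcases hT01 ω with h | h <;> rw [h] <;> norm_num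
  have hBT : MyBdd μ T := ⟨hT.aestronglyMeasurable, 1, .of_forall hTbd⟩
  have hBA : ∀ y', MyBdd μ (A y') := fun y' =>
    ⟨(hAm y').aestronglyMeasurable, 1, .of_forall (hAbd y')⟩
  set m := MeasurableSpace.comap X inferInstance with hmdef
  set p' : Ω → ℝ := μ[T | m] with hp'def
  set G' : ℝ → Ω → ℝ := fun y' => μ[A y' | m] with hG'def
  have hp' : p =ᵐ[μ] p' := hp
  have hG1' : ∀ y', G1 y' =ᵐ[μ] G' y' := fun y' => hG1 y'
  have hTA_int : ∀ y', Integrable (fun ω => T ω * A y' ω) μ := fun y' =>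
    (hBT.mul (hBA y')).integrable
  have hp'm : StronglyMeasurable[m] p' := stronglyMeasurable_condExp
  have hG'm : ∀ y', StronglyMeasurable[m] (G' y') := fun _ => stronglyMeasurable_condExp
  have hpδ' : ∀ᵐ ω ∂μ, δ ≤ p' ω ∧ p' ω ≤ 1 - δ := by
    filter_upwards [hpδ, hp'] with ω h1 h2
    rw [← h2]; exact h1
  have hG'bd : ∀ y', ∀ᵐ ω ∂μ, 0 ≤ G' y' ω ∧ G' y' ω ≤ 1 := by
    intro y'
    have h0 : (0 : Ω → ℝ) ≤ᵐ[μ] G' y' := condExp_nonneg (Filter.Eventually.of_forall fun ω => by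
      simp only [hAdef, Pi.zero_apply]; split <;> norm_num)
    have h1 : G' y' ≤ᵐ[μ] μ[(fun _ => (1:ℝ)) | m] :=
      condExp_mono (hBA y').integrable (integrable_const 1)
        (Filter.Eventually.of_forall fun ω => by simp only [hAdef]; split <;> norm_num)
    have h2 : μ[(fun _ => (1:ℝ)) | m] = fun _ => (1:ℝ) := condExp_const hm 1
    rw [h2] at h1
    filter_upwards [h0, h1] with ω ha hb
    exact ⟨ha, hb⟩
  have hBp' : MyBdd μ p' := ⟨((hp'm.mono hm).aestronglyMeasurable), 1, by
    filter_upwards [hpδ'] with ω h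
    rw [abs_le]; constructor <;> [linarith [hδ.1]; linarith [hδ.1]]⟩
  set c : Ω → ℝ := fun ω => (p' ω)⁻¹ with hcdef
  have hcm : StronglyMeasurable[m] c := hp'm.measurable.inv.stronglyMeasurable
  have hBc : MyBdd μ c := ⟨(hcm.mono hm).aestronglyMeasurable, δ⁻¹, by
    filter_upwards [hpδ'] with ω h
    have hppos : 0 < p' ω := lt_of_lt_of_le hδ.1 h.1
    rw [hcdef, abs_of_pos (inv_pos.2 hppos)]
    exact inv_anti₀ hδ.1 h.1⟩
  have hBG : ∀ y', MyBdd μ (G' y') := fun y' =>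
    ⟨((hG'm y').mono hm).aestronglyMeasurable, 1, by
      filter_upwards [hG'bd y'] with ω h
      rw [abs_le]; constructor <;> linarith [h.1, h.2]⟩
  -- the key conditional-independence identity
  have hK : ∀ y', μ[fun ω => T ω * A y' ω | m] =ᵐ[μ] fun ω => p' ω * G' y' ω := by
    intro y'
    have hs : MeasurableSet {q : ℝ × ℝ | q.1 ≤ y'} :=
      measurableSet_le measurable_fst measurable_const
    have ht : MeasurableSet ({1} : Set ℝ) := measurableSet_singleton 1
    have h := (condIndepFun_iff_condExp_inter_preimage_eq_mul
      (hY1.prodMk hY0) hT).mp hindep _ _ hs ht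
    have e1 : Set.indicator ((fun ω => (Y1 ω, Y0 ω)) ⁻¹' {q : ℝ × ℝ | q.1 ≤ y'} ∩ T ⁻¹' {1})
        (fun _ => (1:ℝ)) = fun ω => T ω * A y' ω := by
      funext ω
      rcases hT01 ω with h0 | h1
      · rw [Set.indicator_apply, if_neg, h0, zero_mul]
        simp [Set.mem_inter_iff, h0]
      · rw [Set.indicator_apply, h1, one_mul]
        by_cases hY1y : Y1 ω ≤ y' <;> simp [hAdef, Set.mem_inter_iff, h1, hY1y]
    have e2 : Set.indicator ((fun ω => (Y1 ω, Y0 ω)) ⁻¹' {q : ℝ × ℝ | q.1 ≤ y'})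
        (fun _ => (1:ℝ)) = A y' := by
      funext ω; by_cases hY1y : Y1 ω ≤ y' <;> simp [hAdef, hY1y]
    have e3 : Set.indicator (T ⁻¹' {1}) (fun _ => (1:ℝ)) = T := by
      funext ω; rcases hT01 ω with h0 | h0 <;> simp [h0]
    rw [e1, e2, e3] at h
    exact h.trans (Filter.Eventually.of_forall fun ω => mul_comm _ _)
  -- abbreviations
  set Gy : Ω → ℝ := G' y with hGydef
  set Gt : Ω → ℝ := G' t with hGtdef
  set Gm : Ω → ℝ := G' (min y t) with hGmdef
  set s1 : Ω → ℝ := fun ω => c ω * c ω with hs1def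
  set s2 : Ω → ℝ := fun ω => -(c ω * c ω) * Gt ω + c ω * (Gt ω - F1 t) with hs2def
  set s3 : Ω → ℝ := fun ω => -(c ω * c ω) * Gy ω + c ω * (Gy ω - F1 y) with hs3def
  set s4 : Ω → ℝ := fun ω => c ω * c ω * (Gy ω * Gt ω) - c ω * Gy ω * (Gt ω - F1 t)
      - c ω * Gt ω * (Gy ω - F1 y) with hs4def
  set ψ : Ω → ℝ := fun ω => (Gy ω - F1 y) * (Gt ω - F1 t) with hψdef
  have hGym : StronglyMeasurable[m] Gy := hG'm y
  have hGtm : StronglyMeasurable[m] Gt := hG'm t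
  have hs1m : StronglyMeasurable[m] s1 := hcm.mul hcm
  have hs2m : StronglyMeasurable[m] s2 :=
    ((hcm.mul hcm).neg.mul hGtm).add (hcm.mul (hGtm.sub stronglyMeasurable_const))
  have hs3m : StronglyMeasurable[m] s3 :=
    ((hcm.mul hcm).neg.mul hGym).add (hcm.mul (hGym.sub stronglyMeasurable_const))
  have hs4m : StronglyMeasurable[m] s4 :=
    (((hcm.mul hcm).mul (hGym.mul hGtm)).sub
      ((hcm.mul hGym).mul (hGtm.sub stronglyMeasurable_const))).sub
      ((hcm.mul hGtm).mul (hGym.sub stronglyMeasurable_const))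
  have hBGy : MyBdd μ Gy := hBG y
  have hBGt : MyBdd μ Gt := hBG t
  have hBGm : MyBdd μ Gm := hBG (min y t)
  have hBs1 : MyBdd μ s1 := hBc.mul hBc
  have hBs2 : MyBdd μ s2 :=
    ((hBc.mul hBc).neg.mul hBGt).add (hBc.mul (hBGt.sub (MyBdd.const _)))
  have hBs3 : MyBdd μ s3 :=
    ((hBc.mul hBc).neg.mul hBGy).add (hBc.mul (hBGy.sub (MyBdd.const _)))
  have hBs4 : MyBdd μ s4 :=
    (((hBc.mul hBc).mul (hBGy.mul hBGt)).sub
      ((hBc.mul hBGy).mul (hBGt.sub (MyBdd.const _)))).sub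
      ((hBc.mul hBGt).mul (hBGy.sub (MyBdd.const _)))
  have hBψ : MyBdd μ ψ := (hBGy.sub (MyBdd.const _)).mul (hBGt.sub (MyBdd.const _))
  have hI1 : Integrable (fun ω => s1 ω * (T ω * A (min y t) ω)) μ :=
    (hBs1.mul (hBT.mul (hBA _))).integrable
  have hI2 : Integrable (fun ω => s2 ω * (T ω * A y ω)) μ :=
    (hBs2.mul (hBT.mul (hBA _))).integrable
  have hI3 : Integrable (fun ω => s3 ω * (T ω * A t ω)) μ :=
    (hBs3.mul (hBT.mul (hBA _))).integrable
  have hI4 : Integrable (fun ω => s4 ω * T ω) μ := (hBs4.mul hBT).integrable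
  have hI5 : Integrable ψ μ := hBψ.integrable
  have hJ1 : Integrable (fun ω => s1 ω * (p' ω * Gm ω)) μ :=
    (hBs1.mul (hBp'.mul hBGm)).integrable
  have hJ2 : Integrable (fun ω => s2 ω * (p' ω * Gy ω)) μ :=
    (hBs2.mul (hBp'.mul hBGy)).integrable
  have hJ3 : Integrable (fun ω => s3 ω * (p' ω * Gt ω)) μ :=
    (hBs3.mul (hBp'.mul hBGt)).integrable
  have hJ4 : Integrable (fun ω => s4 ω * p' ω) μ := (hBs4.mul hBp').integrable
  -- step 1 : rewrite the integrand
  have step1 : ∫ ω, Z1 y ω * Z1 t ω ∂μ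
      = ∫ ω, (s1 ω * (T ω * A (min y t) ω) + s2 ω * (T ω * A y ω)
          + s3 ω * (T ω * A t ω) + s4 ω * T ω + ψ ω) ∂μ := by
    refine integral_congr_ae ?_
    filter_upwards [hp', hG1' y, hG1' t, hpδ'] with ω hpω hgyω hgtω hδω
    have hp0 : p' ω ≠ 0 := ne_of_gt (lt_of_lt_of_le hδ.1 hδω.1)
    rw [hZ1, hZ1, hpω, hgyω, hgtω]
    simp only [hs1def, hs2def, hs3def, hs4def, hψdef, hcdef, hGydef, hGtdef, hGmdef, hAdef]
    rcases hT01 ω with h0 | h1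
    · rw [h0]; field_simp; ring
    · have hYω : Y ω = Y1 ω := by rw [hY ω, h1]; ring
      rw [h1, hYω]
      rcases le_or_gt (Y1 ω) y with hy1 | hy1 <;> rcases le_or_gt (Y1 ω) t with ht1 | ht1
      · rw [if_pos hy1, if_pos ht1, if_pos (le_min hy1 ht1)]
        field_simp; ring
      · rw [if_pos hy1, if_neg (not_le.2 ht1),
          if_neg (fun hc => absurd (le_trans hc (min_le_right y t)) (not_le.2 ht1))]
        field_simp; ring
      · rw [if_neg (not_le.2 hy1), if_pos ht1,
          if_neg (fun hc => absurd (le_trans hc (min_le_left y t)) (not_le.2 hy1))]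
        field_simp; ring
      · rw [if_neg (not_le.2 hy1), if_neg (not_le.2 ht1),
          if_neg (fun hc => absurd (le_trans hc (min_le_left y t)) (not_le.2 hy1))]
        field_simp; ring
  -- step 2 : conditioning identities
  have e1 : ∫ ω, s1 ω * (T ω * A (min y t) ω) ∂μ = ∫ ω, s1 ω * (p' ω * Gm ω) ∂μ :=
    my_cond_int hm _ _ _ (hTA_int _) (hK (min y t)) hs1m hI1
  have e2 : ∫ ω, s2 ω * (T ω * A y ω) ∂μ = ∫ ω, s2 ω * (p' ω * Gy ω) ∂μ :=
    my_cond_int hm _ _ _ (hTA_int _) (hK y) hs2m hI2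
  have e3 : ∫ ω, s3 ω * (T ω * A t ω) ∂μ = ∫ ω, s3 ω * (p' ω * Gt ω) ∂μ :=
    my_cond_int hm _ _ _ (hTA_int _) (hK t) hs3m hI3
  have e4 : ∫ ω, s4 ω * T ω ∂μ = ∫ ω, s4 ω * p' ω ∂μ :=
    my_cond_int hm T p' s4 hBT.integrable Filter.EventuallyEq.rfl hs4m hI4
  -- step 3 : combine the conditioned terms
  have comb : ∫ ω, (s1 ω * (p' ω * Gm ω) + s2 ω * (p' ω * Gy ω) + s3 ω * (p' ω * Gt ω)
      + s4 ω * p' ω) ∂μ = ∫ ω, c ω * (Gm ω - Gy ω * Gt ω) ∂μ := by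
    refine integral_congr_ae ?_
    filter_upwards [hpδ'] with ω hδω
    have hp0 : p' ω ≠ 0 := ne_of_gt (lt_of_lt_of_le hδ.1 hδω.1)
    simp only [hs1def, hs2def, hs3def, hs4def, hcdef]
    field_simp
    ring
  -- right-hand side rewriting
  have rhs1 : ∫ ω, (1 / p ω) * (G1 (min y t) ω - G1 y ω * G1 t ω) ∂μ
      = ∫ ω, c ω * (Gm ω - Gy ω * Gt ω) ∂μ := by
    refine integral_congr_ae ?_
    filter_upwards [hp', hG1' y, hG1' t, hG1' (min y t)] with ω hpω hgyω hgtω hgmω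
    rw [hpω, hgyω, hgtω, hgmω, hcdef, one_div]
  have rhs2 : ∫ ω, (G1 y ω - F1 y) * (G1 t ω - F1 t) ∂μ = ∫ ω, ψ ω ∂μ := by
    refine integral_congr_ae ?_
    filter_upwards [hG1' y, hG1' t] with ω hgyω hgtω
    rw [hψdef, hgyω, hgtω]
  -- splitting lemmas (explicit statements so that `rw` can use them syntactically)
  have sp1 : ∫ ω, (s1 ω * (T ω * A (min y t) ω) + s2 ω * (T ω * A y ω)
          + s3 ω * (T ω * A t ω) + s4 ω * T ω + ψ ω) ∂μ
      = (∫ ω, (s1 ω * (T ω * A (min y t) ω) + s2 ω * (T ω * A y ω)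
          + s3 ω * (T ω * A t ω) + s4 ω * T ω) ∂μ) + ∫ ω, ψ ω ∂μ :=
    integral_add (((hI1.add hI2).add hI3).add hI4) hI5
  have sp2 : ∫ ω, (s1 ω * (T ω * A (min y t) ω) + s2 ω * (T ω * A y ω)
          + s3 ω * (T ω * A t ω) + s4 ω * T ω) ∂μ
      = (∫ ω, (s1 ω * (T ω * A (min y t) ω) + s2 ω * (T ω * A y ω)
          + s3 ω * (T ω * A t ω)) ∂μ) + ∫ ω, s4 ω * T ω ∂μ :=
    integral_add ((hI1.add hI2).add hI3) hI4
  have sp3 : ∫ ω, (s1 ω * (T ω * A (min y t) ω) + s2 ω * (T ω * A y ω)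
          + s3 ω * (T ω * A t ω)) ∂μ
      = (∫ ω, (s1 ω * (T ω * A (min y t) ω) + s2 ω * (T ω * A y ω)) ∂μ)
          + ∫ ω, s3 ω * (T ω * A t ω) ∂μ :=
    integral_add (hI1.add hI2) hI3
  have sp4 : ∫ ω, (s1 ω * (T ω * A (min y t) ω) + s2 ω * (T ω * A y ω)) ∂μ
      = (∫ ω, s1 ω * (T ω * A (min y t) ω) ∂μ) + ∫ ω, s2 ω * (T ω * A y ω) ∂μ :=
    integral_add hI1 hI2
  have sq4 : ∫ ω, (s1 ω * (p' ω * Gm ω) + s2 ω * (p' ω * Gy ω)) ∂μ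
      = (∫ ω, s1 ω * (p' ω * Gm ω) ∂μ) + ∫ ω, s2 ω * (p' ω * Gy ω) ∂μ :=
    integral_add hJ1 hJ2
  have sq3 : ∫ ω, (s1 ω * (p' ω * Gm ω) + s2 ω * (p' ω * Gy ω) + s3 ω * (p' ω * Gt ω)) ∂μ
      = (∫ ω, (s1 ω * (p' ω * Gm ω) + s2 ω * (p' ω * Gy ω)) ∂μ)
          + ∫ ω, s3 ω * (p' ω * Gt ω) ∂μ :=
    integral_add (hJ1.add hJ2) hJ3
  have sq2 : ∫ ω, (s1 ω * (p' ω * Gm ω) + s2 ω * (p' ω * Gy ω) + s3 ω * (p' ω * Gt ω)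
          + s4 ω * p' ω) ∂μ
      = (∫ ω, (s1 ω * (p' ω * Gm ω) + s2 ω * (p' ω * Gy ω) + s3 ω * (p' ω * Gt ω)) ∂μ)
          + ∫ ω, s4 ω * p' ω ∂μ :=
    integral_add ((hJ1.add hJ2).add hJ3) hJ4
  -- put everything together
  rw [step1, rhs1, rhs2, sp1, sp2, sp3, sp4, e1, e2, e3, e4, ← sq4, ← sq3, ← sq2, comb]
end

section
/- For all real y and t, E[Z₁(y)·Z₀(t)] = E[G₁(y)·G₀(t)] − F₁(y)·F₀(t). -/
/-!
Since `T (1 - T) = 0` and `T 1{Y ≤ y} = T 1{Y₁ ≤ y}`, wherever `0 < p < 1` the product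
splits as
`Z₁(y) Z₀(t) = (G₀ - F₀)/p · T (1{Y₁ ≤ y} - G₁) + (G₁ - F₁)/(1 - p) · (1 - T) (1{Y₀ ≤ t} - G₀)
  + (G₁ - F₁)(G₀ - F₀)`.
By unconfoundedness `E[T 1{Y₁ ≤ y} | X] = p G₁`, so the residual `T (1{Y₁ ≤ y} - G₁)` has
conditional mean zero given `X`; multiplied by the bounded `σ(X)`-measurable weight
`(G₀ - F₀)/p` it integrates to zero, and likewise for the control arm. What remains is the
covariance of `G₁(y)` and `G₀(t)`, whose means are `F₁(y)` and `F₀(t)`.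
-/

open MeasureTheory ProbabilityTheory
open scoped ENNReal

lemma aipw_mul_aipw_eq {T p a b i₁ i₀ g₁ g₀ f₁ f₀ : ℝ} (hT : T = 0 ∨ T = 1) (hp : p ≠ 0)
    (hq : 1 - p ≠ 0) (ha : T = 1 → a = i₁) (hb : T = 0 → b = i₀) :
    (T / p * a - f₁ - g₁ / p * (T - p)) *
        ((1 - T) / (1 - p) * b - f₀ - g₀ / (1 - p) * ((1 - T) - (1 - p))) =
      p⁻¹ * (g₀ - f₀) * (T * (i₁ - g₁)) + (1 - p)⁻¹ * (g₁ - f₁) * ((1 - T) * (i₀ - g₀)) +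
        (g₁ - f₁) * (g₀ - f₀) := by
  rcases hT with rfl | rfl
  · rw [hb rfl]; field_simp; ring
  · rw [ha rfl]; field_simp; ring

section

variable {Ω : Type*} {m mΩ : MeasurableSpace Ω} {μ : Measure Ω}

lemma integral_mul_eq_zero_of_condExp_eq_zero [IsFiniteMeasure μ] (hm : m ≤ mΩ)
    {h U : Ω → ℝ} (hh : AEStronglyMeasurable[m] h μ) (hhU : Integrable (h * U) μ)
    (hU : Integrable U μ) (hU0 : μ[U|m] =ᵐ[μ] 0) : ∫ ω, h ω * U ω ∂μ = 0 :=
  calc ∫ ω, h ω * U ω ∂μ = ∫ ω, (μ[h * U|m]) ω ∂μ := (integral_condExp hm).symm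
    _ = ∫ ω, (h * μ[U|m]) ω ∂μ :=
      integral_congr_ae (condExp_mul_of_aestronglyMeasurable_left hh hhU hU)
    _ = 0 := integral_eq_zero_of_ae (by filter_upwards [hU0] with ω hω; simp [hω])

lemma condExp_mul_sub_eq_zero [IsFiniteMeasure μ] {S I G : Ω → ℝ}
    (hS : MemLp S ∞ μ) (hI : MemLp I ∞ μ) (hG : G =ᵐ[μ] μ[I|m])
    (hSI : μ[S * I|m] =ᵐ[μ] μ[S|m] * μ[I|m]) : μ[S * (I - G)|m] =ᵐ[μ] 0 := by
  have hG_m : AEStronglyMeasurable[m] G μ :=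
    stronglyMeasurable_condExp.aestronglyMeasurable.congr hG.symm
  have hG_top : MemLp G ∞ μ := (hI.condExp le_top).ae_eq hG.symm
  have hGS : μ[G * S|m] =ᵐ[μ] G * μ[S|m] := condExp_mul_of_aestronglyMeasurable_left hG_m
    ((hS.mul hG_top).integrable le_top) (hS.integrable le_top)
  rw [show S * (I - G) = S * I - G * S by ring]
  filter_upwards [condExp_sub ((hI.mul hS).integrable le_top)
    ((hS.mul hG_top).integrable le_top) m, hSI, hGS, hG] with ω h₁ h₂ h₃ h₄
  simp only [h₁, Pi.sub_apply, h₂, h₃, Pi.mul_apply, h₄, Pi.zero_apply]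
  ring

lemma memLp_top_inv_of_le {q : Ω → ℝ} {δ : ℝ} (hq : AEStronglyMeasurable q μ) (hδ : 0 < δ)
    (hqδ : ∀ᵐ ω ∂μ, δ ≤ q ω) : MemLp q⁻¹ ∞ μ :=
  memLp_top_of_bound hq.inv₀ δ⁻¹ <| by
    filter_upwards [hqδ] with ω h
    rw [Pi.inv_apply, norm_inv, Real.norm_of_nonneg (hδ.le.trans h)]
    exact inv_anti₀ hδ h

lemma integrable_inv_mul_mul_mul_sub [IsFiniteMeasure μ] {q G' S I G : Ω → ℝ} {c δ : ℝ}
    (hq : AEStronglyMeasurable q μ) (hδ : 0 < δ) (hqδ : ∀ᵐ ω ∂μ, δ ≤ q ω)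
    (hG' : MemLp G' ∞ μ) (hS : MemLp S ∞ μ) (hI : MemLp I ∞ μ) (hG : MemLp G ∞ μ) :
    Integrable (fun ω => (q ω)⁻¹ * (G' ω - c) * (S ω * (I ω - G ω))) μ := by
  have hH : MemLp (fun ω => (q ω)⁻¹ * (G' ω - c)) ∞ μ :=
    (hG'.sub (memLp_top_const c)).mul' (memLp_top_inv_of_le hq hδ hqδ)
  have hU : MemLp (fun ω => S ω * (I ω - G ω)) ∞ μ := (hI.sub hG).mul' hS
  exact (hU.mul' hH).integrable le_top

lemma integral_inv_mul_mul_mul_sub_eq_zero [IsFiniteMeasure μ] (hm : m ≤ mΩ)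
    {q G' S I G : Ω → ℝ} {c δ : ℝ} (hq : AEStronglyMeasurable[m] q μ) (hδ : 0 < δ)
    (hqδ : ∀ᵐ ω ∂μ, δ ≤ q ω) (hG'_m : AEStronglyMeasurable[m] G' μ) (hG' : MemLp G' ∞ μ)
    (hS : MemLp S ∞ μ) (hI : MemLp I ∞ μ) (hG : G =ᵐ[μ] μ[I|m])
    (hSI : μ[S * I|m] =ᵐ[μ] μ[S|m] * μ[I|m]) :
    ∫ ω, (q ω)⁻¹ * (G' ω - c) * (S ω * (I ω - G ω)) ∂μ = 0 := by
  have hG_top : MemLp G ∞ μ := (hI.condExp le_top).ae_eq hG.symm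
  exact integral_mul_eq_zero_of_condExp_eq_zero hm
    (hq.inv₀.mul (hG'_m.sub aestronglyMeasurable_const))
    (integrable_inv_mul_mul_mul_sub (hq.mono hm) hδ hqδ hG' hS hI hG_top)
    ((((hI.sub hG_top).mul' hS) : MemLp _ ∞ μ).integrable le_top)
    (condExp_mul_sub_eq_zero hS hI hG hSI)

lemma integral_ipw_residuals_add_eq [IsFiniteMeasure μ] (hm : m ≤ mΩ)
    {T p I₁ I₀ G₁ G₀ : Ω → ℝ} {c₁ c₀ δ : ℝ} (hT : MemLp T ∞ μ) (hp : p =ᵐ[μ] μ[T|m]) (hδ : 0 < δ)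
    (hpδ : ∀ᵐ ω ∂μ, δ ≤ p ω ∧ p ω ≤ 1 - δ) (hI₁ : MemLp I₁ ∞ μ) (hI₀ : MemLp I₀ ∞ μ)
    (hG₁ : G₁ =ᵐ[μ] μ[I₁|m]) (hG₀ : G₀ =ᵐ[μ] μ[I₀|m])
    (h₁ : μ[T * I₁|m] =ᵐ[μ] μ[T|m] * μ[I₁|m])
    (h₀ : μ[(1 - T) * I₀|m] =ᵐ[μ] μ[1 - T|m] * μ[I₀|m]) :
    ∫ ω, ((p ω)⁻¹ * (G₀ ω - c₀) * (T ω * (I₁ ω - G₁ ω)) +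
        (1 - p ω)⁻¹ * (G₁ ω - c₁) * ((1 - T ω) * (I₀ ω - G₀ ω)) +
        (G₁ ω - c₁) * (G₀ ω - c₀)) ∂μ = ∫ ω, (G₁ ω - c₁) * (G₀ ω - c₀) ∂μ := by
  have hp_m : AEStronglyMeasurable[m] p μ :=
    stronglyMeasurable_condExp.aestronglyMeasurable.congr hp.symm
  have hq_m : AEStronglyMeasurable[m] (fun ω => 1 - p ω) μ :=
    aestronglyMeasurable_const.sub hp_m
  have hpδ₁ : ∀ᵐ ω ∂μ, δ ≤ p ω := hpδ.mono fun _ h => h.1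
  have hpδ₀ : ∀ᵐ ω ∂μ, δ ≤ 1 - p ω := hpδ.mono fun _ h => by linarith [h.2]
  have hG₁_m : AEStronglyMeasurable[m] G₁ μ :=
    stronglyMeasurable_condExp.aestronglyMeasurable.congr hG₁.symm
  have hG₀_m : AEStronglyMeasurable[m] G₀ μ :=
    stronglyMeasurable_condExp.aestronglyMeasurable.congr hG₀.symm
  have hG₁_top : MemLp G₁ ∞ μ := (hI₁.condExp le_top).ae_eq hG₁.symm
  have hG₀_top : MemLp G₀ ∞ μ := (hI₀.condExp le_top).ae_eq hG₀.symm
  have hS₀ : MemLp (fun ω => 1 - T ω) ∞ μ := (memLp_top_const 1).sub hT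
  have hint₁ := integrable_inv_mul_mul_mul_sub (c := c₀) (hp_m.mono hm) hδ hpδ₁ hG₀_top hT hI₁
    hG₁_top
  have hint₀ := integrable_inv_mul_mul_mul_sub (c := c₁) (hq_m.mono hm) hδ hpδ₀ hG₁_top hS₀ hI₀
    hG₀_top
  have hint : Integrable (fun ω => (G₁ ω - c₁) * (G₀ ω - c₀)) μ :=
    (((hG₀_top.sub (memLp_top_const c₀)).mul' (hG₁_top.sub (memLp_top_const c₁))) :
      MemLp _ ∞ μ).integrable le_top
  rw [integral_add (hint₁.fun_add hint₀) hint, integral_add hint₁ hint₀,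
    integral_inv_mul_mul_mul_sub_eq_zero hm hp_m hδ hpδ₁ hG₀_m hG₀_top hT hI₁ hG₁ h₁,
    integral_inv_mul_mul_mul_sub_eq_zero hm hq_m hδ hpδ₀ hG₁_m hG₁_top hS₀ hI₀ hG₀ h₀,
    zero_add, zero_add]

theorem CondIndepFun.condExp_indicator_mul_indicator [StandardBorelSpace Ω]
    [IsFiniteMeasure μ] {β β' : Type*} [MeasurableSpace β] [MeasurableSpace β'] {hm : m ≤ mΩ}
    {f : Ω → β} {g : Ω → β'} (hfg : CondIndepFun m hm f g μ) (hf : Measurable f)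
    (hg : Measurable g) {s : Set β} {t : Set β'} (hs : MeasurableSet s) (ht : MeasurableSet t) :
    μ[(f ⁻¹' s).indicator (1 : Ω → ℝ) * (g ⁻¹' t).indicator (1 : Ω → ℝ)|m] =ᵐ[μ]
      μ[(f ⁻¹' s).indicator (1 : Ω → ℝ)|m] * μ[(g ⁻¹' t).indicator (1 : Ω → ℝ)|m] := by
  rw [← Set.inter_indicator_one]
  exact (condIndepFun_iff_condExp_inter_preimage_eq_mul hf hg).1 hfg s t hs ht

lemma indicator_preimage_one_eq_self {T : Ω → ℝ} (hT : ∀ ω, T ω = 0 ∨ T ω = 1) :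
    (T ⁻¹' {1}).indicator (1 : Ω → ℝ) = T := by
  ext ω
  rcases hT ω with h | h <;> simp [h]

theorem CondIndepFun.condExp_mul_indicator_of_binary [StandardBorelSpace Ω]
    [IsFiniteMeasure μ] {β : Type*} [MeasurableSpace β] {hm : m ≤ mΩ} {S : Ω → ℝ} {V : Ω → β}
    (hSV : CondIndepFun m hm S V μ) (hS : Measurable S) (hV : Measurable V)
    (hS01 : ∀ ω, S ω = 0 ∨ S ω = 1) {s : Set β} (hs : MeasurableSet s) :
    μ[S * (V ⁻¹' s).indicator 1|m] =ᵐ[μ] μ[S|m] * μ[(V ⁻¹' s).indicator 1|m] := by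
  have := CondIndepFun.condExp_indicator_mul_indicator hSV hS hV (measurableSet_singleton 1) hs
  rwa [indicator_preimage_one_eq_self hS01] at this

theorem CondIndepFun.integral_ipw_residuals_add_eq [StandardBorelSpace Ω]
    [IsFiniteMeasure μ] {β : Type*} [MeasurableSpace β] {hm : m ≤ mΩ} {V : Ω → β}
    {T p G₁ G₀ : Ω → ℝ} {s₁ s₀ : Set β} {c₁ c₀ δ : ℝ} (hVT : CondIndepFun m hm V T μ)
    (hV : Measurable V) (hT : Measurable T) (hT01 : ∀ ω, T ω = 0 ∨ T ω = 1)
    (hp : p =ᵐ[μ] μ[T|m]) (hδ : 0 < δ)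
    (hpδ : ∀ᵐ ω ∂μ, δ ≤ p ω ∧ p ω ≤ 1 - δ) (hs₁ : MeasurableSet s₁) (hs₀ : MeasurableSet s₀)
    (hG₁ : G₁ =ᵐ[μ] μ[(V ⁻¹' s₁).indicator 1|m])
    (hG₀ : G₀ =ᵐ[μ] μ[(V ⁻¹' s₀).indicator 1|m]) :
    ∫ ω, ((p ω)⁻¹ * (G₀ ω - c₀) * (T ω * ((V ⁻¹' s₁).indicator 1 ω - G₁ ω)) +
        (1 - p ω)⁻¹ * (G₁ ω - c₁) * ((1 - T ω) * ((V ⁻¹' s₀).indicator 1 ω - G₀ ω)) +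
        (G₁ ω - c₁) * (G₀ ω - c₀)) ∂μ = ∫ ω, (G₁ ω - c₁) * (G₀ ω - c₀) ∂μ := by
  have hT_top : MemLp T ∞ μ := memLp_top_of_bound hT.aestronglyMeasurable 1
    (ae_of_all _ fun ω => by rcases hT01 ω with h | h <;> simp [h])
  have h₁ := CondIndepFun.condExp_mul_indicator_of_binary hVT.symm hT hV hT01 hs₁
  have h₀ := CondIndepFun.condExp_mul_indicator_of_binary (S := 1 - T)
    (hVT.symm.comp (measurable_const.sub measurable_id) measurable_id)
    (measurable_const.sub hT) hV (fun ω => by rcases hT01 ω with h | h <;> simp [h]) hs₀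
  exact _root_.integral_ipw_residuals_add_eq hm hT_top hp hδ hpδ
    ((memLp_top_const 1).indicator (hV hs₁)) ((memLp_top_const 1).indicator (hV hs₀)) hG₁ hG₀
    h₁ h₀

lemma memLp_of_ae_eq_condExp_indicator [IsFiniteMeasure μ] {G : Ω → ℝ} {s : Set Ω}
    (hs : MeasurableSet s) (hG : G =ᵐ[μ] μ[s.indicator 1|m]) (q : ℝ≥0∞) : MemLp G q μ :=
  ((((memLp_top_const (1 : ℝ)).indicator hs).condExp le_top).ae_eq hG.symm).mono_exponent
    le_top

lemma integral_eq_measureReal_of_ae_eq_condExp [IsFiniteMeasure μ] (hm : m ≤ mΩ) {G : Ω → ℝ}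
    {s : Set Ω} (hs : MeasurableSet s) (hG : G =ᵐ[μ] μ[s.indicator (1 : Ω → ℝ)|m]) :
    ∫ ω, G ω ∂μ = μ.real s := by
  rw [integral_congr_ae hG, integral_condExp hm, integral_indicator_one hs]

end

theorem stmt_13_general
    {Ω : Type*} [MeasurableSpace Ω] [StandardBorelSpace Ω]
    {𝒳 : Type*} [MeasurableSpace 𝒳]
    (μ : Measure Ω) [IsProbabilityMeasure μ]
    (X : Ω → 𝒳) (T : Ω → ℝ) (Y1 Y0 : Ω → ℝ)
    (hX : Measurable X) (hT : Measurable T) (hY1 : Measurable Y1) (hY0 : Measurable Y0)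
    (hT01 : ∀ ω, T ω = 0 ∨ T ω = 1)
    (Y : Ω → ℝ) (hY : ∀ ω, Y ω = T ω * Y1 ω + (1 - T ω) * Y0 ω)
    (p : Ω → ℝ)
    (hp : p =ᵐ[μ] μ[T | MeasurableSpace.comap X inferInstance])
    (δ : ℝ) (hδ : δ ∈ Set.Ioo (0 : ℝ) (1/2))
    (hpδ : ∀ᵐ ω ∂μ, δ ≤ p ω ∧ p ω ≤ 1 - δ)
    (hindep : CondIndepFun (MeasurableSpace.comap X inferInstance) hX.comap_le
      (fun ω => (Y1 ω, Y0 ω)) T μ)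
    (F1 : ℝ → ℝ) (hF1 : ∀ y, F1 y = (μ {ω | Y1 ω ≤ y}).toReal)
    (F0 : ℝ → ℝ) (hF0 : ∀ y, F0 y = (μ {ω | Y0 ω ≤ y}).toReal)
    (G1 : ℝ → Ω → ℝ)
    (hG1 : ∀ y, G1 y =ᵐ[μ]
      μ[fun ω => if Y1 ω ≤ y then (1 : ℝ) else 0 | MeasurableSpace.comap X inferInstance])
    (G0 : ℝ → Ω → ℝ)
    (hG0 : ∀ y, G0 y =ᵐ[μ]
      μ[fun ω => if Y0 ω ≤ y then (1 : ℝ) else 0 | MeasurableSpace.comap X inferInstance])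
    (Z1 : ℝ → Ω → ℝ)
    (hZ1 : ∀ y ω, Z1 y ω = (T ω / p ω) * (if Y ω ≤ y then (1 : ℝ) else 0) - F1 y
      - (G1 y ω / p ω) * (T ω - p ω))
    (Z0 : ℝ → Ω → ℝ)
    (hZ0 : ∀ y ω, Z0 y ω = ((1 - T ω) / (1 - p ω)) * (if Y ω ≤ y then (1 : ℝ) else 0) - F0 y
      - (G0 y ω / (1 - p ω)) * ((1 - T ω) - (1 - p ω)))
    (y t : ℝ) :
    ∫ ω, Z1 y ω * Z0 t ω ∂μ = (∫ ω, G1 y ω * G0 t ω ∂μ) - F1 y * F0 t := by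
  set V : Ω → ℝ × ℝ := fun ω => (Y1 ω, Y0 ω)
  have hV : Measurable V := hY1.prodMk hY0
  set s₁ : Set (ℝ × ℝ) := {v | v.1 ≤ y}
  set s₀ : Set (ℝ × ℝ) := {v | v.2 ≤ t}
  have hs₁ : MeasurableSet s₁ := measurableSet_le measurable_fst measurable_const
  have hs₀ : MeasurableSet s₀ := measurableSet_le measurable_snd measurable_const
  have hG₁ : G1 y =ᵐ[μ] μ[(V ⁻¹' s₁).indicator 1|MeasurableSpace.comap X inferInstance] := by
    convert hG1 y using 2; ext ω; simp [Set.indicator_apply, V, s₁]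
  have hG₀ : G0 t =ᵐ[μ] μ[(V ⁻¹' s₀).indicator 1|MeasurableSpace.comap X inferInstance] := by
    convert hG0 t using 2; ext ω; simp [Set.indicator_apply, V, s₀]
  have hdecomp : (fun ω => Z1 y ω * Z0 t ω) =ᵐ[μ] fun ω =>
      (p ω)⁻¹ * (G0 t ω - F0 t) * (T ω * ((V ⁻¹' s₁).indicator 1 ω - G1 y ω)) +
        (1 - p ω)⁻¹ * (G1 y ω - F1 y) * ((1 - T ω) * ((V ⁻¹' s₀).indicator 1 ω - G0 t ω)) +
        (G1 y ω - F1 y) * (G0 t ω - F0 t) := by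
    filter_upwards [hpδ] with ω hω
    rw [hZ1, hZ0]
    exact aipw_mul_aipw_eq (hT01 ω) (by linarith [hδ.1]) (by linarith [hδ.1])
      (fun h => by simp [hY, h, V, s₁, Set.indicator_apply])
      (fun h => by simp [hY, h, V, s₀, Set.indicator_apply])
  have hF₁ : ∫ ω, G1 y ω ∂μ = F1 y :=
    (integral_eq_measureReal_of_ae_eq_condExp hX.comap_le (hV hs₁) hG₁).trans (hF1 y).symm
  have hF₀ : ∫ ω, G0 t ω ∂μ = F0 t :=
    (integral_eq_measureReal_of_ae_eq_condExp hX.comap_le (hV hs₀) hG₀).trans (hF0 t).symm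
  rw [integral_congr_ae hdecomp, CondIndepFun.integral_ipw_residuals_add_eq hindep hV hT hT01
    hp hδ.1 hpδ hs₁ hs₀ hG₁ hG₀, ← hF₁, ← hF₀]
  exact covariance_eq_sub (memLp_of_ae_eq_condExp_indicator (hV hs₁) hG₁ 2)
    (memLp_of_ae_eq_condExp_indicator (hV hs₀) hG₀ 2)

/-- Cross-covariance of the influence functions: for all real `y` and `t`,
`E[Z₁(y)·Z₀(t)] = E[G₁(y)·G₀(t)] − F₁(y)·F₀(t)`. -/
theorem stmt_13
    {Ω : Type*} [MeasurableSpace Ω] [StandardBorelSpace Ω]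
    {𝒳 : Type*} [MeasurableSpace 𝒳] [StandardBorelSpace 𝒳]
    (μ : Measure Ω) [IsProbabilityMeasure μ]
    (X : Ω → 𝒳) (T : Ω → ℝ) (Y1 Y0 : Ω → ℝ)
    (hX : Measurable X) (hT : Measurable T) (hY1 : Measurable Y1) (hY0 : Measurable Y0)
    (hT01 : ∀ ω, T ω = 0 ∨ T ω = 1)
    (Y : Ω → ℝ) (hY : ∀ ω, Y ω = T ω * Y1 ω + (1 - T ω) * Y0 ω)
    (p : Ω → ℝ)
    (hp : p =ᵐ[μ] μ[T | MeasurableSpace.comap X inferInstance])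
    (δ : ℝ) (hδ : δ ∈ Set.Ioo (0 : ℝ) (1/2))
    (hpδ : ∀ᵐ ω ∂μ, δ ≤ p ω ∧ p ω ≤ 1 - δ)
    (hindep : CondIndepFun (MeasurableSpace.comap X inferInstance) hX.comap_le
      (fun ω => (Y1 ω, Y0 ω)) T μ)
    (F1 : ℝ → ℝ) (hF1 : ∀ y, F1 y = (μ {ω | Y1 ω ≤ y}).toReal)
    (F0 : ℝ → ℝ) (hF0 : ∀ y, F0 y = (μ {ω | Y0 ω ≤ y}).toReal)
    (G1 : ℝ → Ω → ℝ)
    (hG1 : ∀ y, G1 y =ᵐ[μ]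
      μ[fun ω => if Y1 ω ≤ y then (1 : ℝ) else 0 | MeasurableSpace.comap X inferInstance])
    (G0 : ℝ → Ω → ℝ)
    (hG0 : ∀ y, G0 y =ᵐ[μ]
      μ[fun ω => if Y0 ω ≤ y then (1 : ℝ) else 0 | MeasurableSpace.comap X inferInstance])
    (Z1 : ℝ → Ω → ℝ)
    (hZ1 : ∀ y ω, Z1 y ω = (T ω / p ω) * (if Y ω ≤ y then (1 : ℝ) else 0) - F1 y
      - (G1 y ω / p ω) * (T ω - p ω))
    (Z0 : ℝ → Ω → ℝ)
    (hZ0 : ∀ y ω, Z0 y ω = ((1 - T ω) / (1 - p ω)) * (if Y ω ≤ y then (1 : ℝ) else 0) - F0 y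
      - (G0 y ω / (1 - p ω)) * ((1 - T ω) - (1 - p ω)))
    (y t : ℝ) :
    ∫ ω, Z1 y ω * Z0 t ω ∂μ = (∫ ω, G1 y ω * G0 t ω ∂μ) - F1 y * F0 t :=
  stmt_13_general μ X T Y1 Y0 hX hT hY1 hY0 hT01 Y hY p hp δ hδ hpδ hindep F1 hF1 F0 hF0 G1 hG1 G0
    hG0 Z1 hZ1 Z0 hZ0 y t
end

section
/- For all real y ≤ t, E[(Z₁(t) − Z₁(y))²] ≤ (1 + 1/δ)·(F₁(t) − F₁(y)) (the moment bound underlying asymptotic equicontinuity of the weighted empirical process). -/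
/-!
Write `J = 1{y < Y₁ ≤ t}`, `g = E[J | m]` and `a = E J = F₁(t) - F₁(y)`. As `T · 1{Y ≤ s} =
T · 1{Y₁ ≤ s}`, the increment is `Z₁(t) - Z₁(y) = T (J - g) / p + (g - a)`. Unconfoundedness gives
`E[T J | m] = p g`, so after conditioning on `m` the cross term vanishes and the first square
contributes `g (1 - g) / p ≤ g / δ`. The second square is the variance of the `[0, 1]`-valued `g`,
at most `E g = a`.
-/

open MeasureTheory ProbabilityTheory

theorem indicator_setOf_le_sub_indicator_setOf_le {Ω : Type*} {Y : Ω → ℝ} {y t : ℝ} (hyt : y ≤ t) :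
    {ω | Y ω ≤ t}.indicator (1 : Ω → ℝ) - {ω | Y ω ≤ y}.indicator 1 =
      (Y ⁻¹' Set.Ioc y t).indicator 1 := by
  have hsub : {ω | Y ω ≤ y} ⊆ {ω | Y ω ≤ t} := fun ω (h : Y ω ≤ y) => h.trans hyt
  rw [← Set.indicator_sdiff hsub]
  congr 1
  ext ω
  simp [and_comm]

section

variable {Ω : Type*} {m : MeasurableSpace Ω} [mΩ : MeasurableSpace Ω] {μ : Measure Ω}

theorem integral_sq_sub_integral_le_integral [IsProbabilityMeasure μ] {X : Ω → ℝ}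
    (hX : AEMeasurable X μ) (h01 : ∀ᵐ ω ∂μ, X ω ∈ Set.Icc 0 1) :
    ∫ ω, (X ω - ∫ ω', X ω' ∂μ) ^ 2 ∂μ ≤ ∫ ω, X ω ∂μ := by
  rw [← variance_eq_integral hX]
  have hmean : 0 ≤ μ[X] := integral_nonneg_of_ae (h01.mono fun _ h => h.1)
  nlinarith [variance_le_sub_mul_sub h01 hX]

theorem integral_mul_eq_integral_mul_condExp [IsFiniteMeasure μ] (hm : m ≤ mΩ) {u f : Ω → ℝ}
    (hu : StronglyMeasurable[m] u) (hu_bdd : MemLp u ⊤ μ) (hf : Integrable f μ) :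
    ∫ ω, u ω * f ω ∂μ = ∫ ω, u ω * μ[f|m] ω ∂μ := by
  rw [← integral_condExp hm]
  exact integral_congr_ae <| condExp_mul_of_stronglyMeasurable_left hu
    (((memLp_one_iff_integrable.2 hf).mul hu_bdd).integrable le_rfl) hf

theorem condExp_mem_Icc_zero_one {f : Ω → ℝ} (hf : ∀ᵐ ω ∂μ, f ω ∈ Set.Icc 0 1) :
    ∀ᵐ ω ∂μ, μ[f|m] ω ∈ Set.Icc 0 1 := by
  filter_upwards [condExp_nonneg (m := m) (hf.mono fun _ h => h.1),
    condExp_le_nonneg_const (m := m) zero_le_one (hf.mono fun _ h => h.2)] with ω h0 h1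
  exact ⟨h0, h1⟩

theorem condExp_mul_indicator_of_condIndepFun [StandardBorelSpace Ω] [IsFiniteMeasure μ]
    (hm : m ≤ mΩ) {β : Type*} [MeasurableSpace β] {Y : Ω → β} {T : Ω → ℝ} (hY : Measurable Y)
    (hT : Measurable T) (hT01 : ∀ ω, T ω = 0 ∨ T ω = 1) (hYT : CondIndepFun m hm Y T μ)
    {B : Set β} (hB : MeasurableSet B) :
    μ[T * (Y ⁻¹' B).indicator 1|m] =ᵐ[μ] μ[T|m] * μ[(Y ⁻¹' B).indicator 1|m] := by
  have hT1 : (T ⁻¹' {1}).indicator 1 = T := by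
    ext ω
    rcases hT01 ω with h | h <;> simp [h]
  rw [← hT1, ← Set.inter_indicator_one]
  exact (condIndepFun_iff_condExp_inter_preimage_eq_mul hT hY).mp hYT.symm _ _
    (measurableSet_singleton 1) hB

theorem memLp_top_mul {f g : Ω → ℝ} (hf : MemLp f ⊤ μ) (hg : MemLp g ⊤ μ) :
    MemLp (fun ω => f ω * g ω) ⊤ μ :=
  hg.mul' hf

theorem memLp_top_inv_of_le_s14 {f : Ω → ℝ} (hf : AEMeasurable f μ) {δ : ℝ} (hδ : 0 < δ)
    (hfδ : ∀ᵐ ω ∂μ, δ ≤ f ω) : MemLp (fun ω => (f ω)⁻¹) ⊤ μ := by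
  refine memLp_top_of_bound hf.inv.aestronglyMeasurable δ⁻¹ ?_
  filter_upwards [hfδ] with ω hω
  rw [norm_inv, Real.norm_of_nonneg (hδ.le.trans hω)]
  exact inv_anti₀ hδ hω

theorem memLp_top_of_zero_or_one {f : Ω → ℝ} (hf : Measurable f) (h01 : ∀ ω, f ω = 0 ∨ f ω = 1) :
    MemLp f ⊤ μ :=
  memLp_top_of_bound hf.aestronglyMeasurable 1 <| ae_of_all _ fun ω => by
    rcases h01 ω with h | h <;> simp [h]

section InverseProbabilityWeighting

variable [IsFiniteMeasure μ] {T J : Ω → ℝ}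

theorem integral_mul_add_mul_eq_of_condExp_mul_eq (hm : m ≤ mΩ) (hT : MemLp T ⊤ μ)
    (hJ : MemLp J ⊤ μ) (hTJ : μ[T * J|m] =ᵐ[μ] μ[T|m] * μ[J|m]) {u v : Ω → ℝ}
    (hu : StronglyMeasurable[m] u) (hv : StronglyMeasurable[m] v) (hu_bdd : MemLp u ⊤ μ)
    (hv_bdd : MemLp v ⊤ μ) :
    ∫ ω, (u ω * (T ω * J ω) + v ω * T ω) ∂μ =
      ∫ ω, (u ω * (μ[T|m] ω * μ[J|m] ω) + v ω * μ[T|m] ω) ∂μ := by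
  have hP : MemLp μ[T|m] ⊤ μ := hT.condExp le_top
  have hg : MemLp μ[J|m] ⊤ μ := hJ.condExp le_top
  rw [integral_add ((memLp_top_mul hu_bdd (memLp_top_mul hT hJ)).integrable le_top)
      ((memLp_top_mul hv_bdd hT).integrable le_top),
    integral_add ((memLp_top_mul hu_bdd (memLp_top_mul hP hg)).integrable le_top)
      ((memLp_top_mul hv_bdd hP).integrable le_top)]
  congr 1
  · exact (integral_mul_eq_integral_mul_condExp hm hu hu_bdd (f := T * J)
      ((memLp_top_mul hT hJ).integrable le_top)).trans
      (integral_congr_ae (hTJ.mono fun ω h => congrArg (u ω * ·) h))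
  · exact integral_mul_eq_integral_mul_condExp hm hv hv_bdd (hT.integrable le_top)

theorem integral_sq_ipw_eq (hm : m ≤ mΩ) (hT : Measurable T) (hJ : Measurable J)
    (hT01 : ∀ ω, T ω = 0 ∨ T ω = 1) (hJ01 : ∀ ω, J ω = 0 ∨ J ω = 1)
    (hTJ : μ[T * J|m] =ᵐ[μ] μ[T|m] * μ[J|m]) {δ : ℝ} (hPδ : ∀ᵐ ω ∂μ, δ ≤ μ[T|m] ω)
    (hδ : 0 < δ) (a : ℝ) :
    ∫ ω, (T ω * (J ω - μ[J|m] ω) / μ[T|m] ω + (μ[J|m] ω - a)) ^ 2 ∂μ =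
      ∫ ω, μ[J|m] ω * (1 - μ[J|m] ω) / μ[T|m] ω ∂μ + ∫ ω, (μ[J|m] ω - a) ^ 2 ∂μ := by
  set P := μ[T|m]
  set g := μ[J|m]
  have hPm : Measurable[m] P := stronglyMeasurable_condExp.measurable
  have hgm : Measurable[m] g := stronglyMeasurable_condExp.measurable
  have hT_bdd : MemLp T ⊤ μ := memLp_top_of_zero_or_one hT hT01
  have hJ_bdd : MemLp J ⊤ μ := memLp_top_of_zero_or_one hJ hJ01
  have hg_bdd : MemLp g ⊤ μ := hJ_bdd.condExp le_top
  have hr_bdd : MemLp (fun ω => (P ω)⁻¹) ⊤ μ :=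
    memLp_top_inv_of_le_s14 (hPm.mono hm le_rfl).aemeasurable hδ hPδ
  -- `T² = T` and `J² = J` make the square affine in `T * J` and `T`, with `m`-measurable weights
  set u : Ω → ℝ := fun ω => (1 - 2 * g ω) * ((P ω)⁻¹ * (P ω)⁻¹) + 2 * (g ω - a) * (P ω)⁻¹
  set v : Ω → ℝ := fun ω => g ω * g ω * ((P ω)⁻¹ * (P ω)⁻¹) - 2 * g ω * (g ω - a) * (P ω)⁻¹
  have hsq : ∀ ω, (T ω * (J ω - g ω) / P ω + (g ω - a)) ^ 2 =
      (u ω * (T ω * J ω) + v ω * T ω) + (g ω - a) ^ 2 := by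
    intro ω
    rcases hT01 ω with hTω | hTω <;> rcases hJ01 ω with hJω | hJω <;>
      simp only [u, v, hTω, hJω] <;> ring
  have hu : MemLp u ⊤ μ :=
    (memLp_top_mul ((memLp_const 1).sub (hg_bdd.const_mul 2)) (memLp_top_mul hr_bdd hr_bdd)).add
      (memLp_top_mul ((hg_bdd.sub (memLp_const a)).const_mul 2) hr_bdd)
  have hv : MemLp v ⊤ μ :=
    (memLp_top_mul (memLp_top_mul hg_bdd hg_bdd) (memLp_top_mul hr_bdd hr_bdd)).sub
      (memLp_top_mul (memLp_top_mul (hg_bdd.const_mul 2) (hg_bdd.sub (memLp_const a))) hr_bdd)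
  have hweights : ∀ᵐ ω ∂μ, u ω * (P ω * g ω) + v ω * P ω = g ω * (1 - g ω) / P ω := by
    filter_upwards [hPδ] with ω hω
    have : P ω ≠ 0 := (hδ.trans_le hω).ne'
    simp only [u, v]
    field_simp
    ring
  calc _ = ∫ ω, (u ω * (T ω * J ω) + v ω * T ω) ∂μ + ∫ ω, (g ω - a) ^ 2 ∂μ := by
        simp_rw [hsq]
        exact integral_add (((memLp_top_mul hu (memLp_top_mul hT_bdd hJ_bdd)).add
          (memLp_top_mul hv hT_bdd)).integrable le_top)
          ((hg_bdd.sub (memLp_const a)).mono_exponent le_top).integrable_sq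
    _ = ∫ ω, (u ω * (P ω * g ω) + v ω * P ω) ∂μ + ∫ ω, (g ω - a) ^ 2 ∂μ := by
        rw [integral_mul_add_mul_eq_of_condExp_mul_eq hm hT_bdd hJ_bdd hTJ (by fun_prop)
          (by fun_prop) hu hv]
    _ = _ := by rw [integral_congr_ae hweights]

theorem integral_sq_ipw_le [IsProbabilityMeasure μ] (hm : m ≤ mΩ) (hT : Measurable T)
    (hJ : Measurable J) (hT01 : ∀ ω, T ω = 0 ∨ T ω = 1) (hJ01 : ∀ ω, J ω = 0 ∨ J ω = 1)
    (hTJ : μ[T * J|m] =ᵐ[μ] μ[T|m] * μ[J|m]) {δ : ℝ} (hPδ : ∀ᵐ ω ∂μ, δ ≤ μ[T|m] ω)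
    (hδ : 0 < δ) :
    ∫ ω, (T ω * (J ω - μ[J|m] ω) / μ[T|m] ω + (μ[J|m] ω - ∫ ω', J ω' ∂μ)) ^ 2 ∂μ ≤
      (1 + 1 / δ) * ∫ ω, J ω ∂μ := by
  rw [integral_sq_ipw_eq hm hT hJ hT01 hJ01 hTJ hPδ hδ, ← integral_condExp hm (f := J)]
  set g := μ[J|m]
  have hg01 : ∀ᵐ ω ∂μ, g ω ∈ Set.Icc 0 1 :=
    condExp_mem_Icc_zero_one (.of_forall fun ω => by rcases hJ01 ω with h | h <;> simp [h])
  have hvar : ∫ ω, (g ω - ∫ ω', g ω' ∂μ) ^ 2 ∂μ ≤ ∫ ω, g ω ∂μ :=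
    integral_sq_sub_integral_le_integral
      (stronglyMeasurable_condExp.measurable.mono hm le_rfl).aemeasurable hg01
  have hipw : ∫ ω, g ω * (1 - g ω) / μ[T|m] ω ∂μ ≤ ∫ ω, g ω / δ ∂μ := by
    refine integral_mono_of_nonneg ?_ (integrable_condExp.div_const δ) ?_
    · filter_upwards [hg01, hPδ] with ω hg hω
      exact div_nonneg (mul_nonneg hg.1 (sub_nonneg.2 hg.2)) (hδ.trans_le hω).le
    · filter_upwards [hg01, hPδ] with ω hg hω
      calc g ω * (1 - g ω) / μ[T|m] ω ≤ g ω / μ[T|m] ω := by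
            gcongr
            · exact (hδ.trans_le hω).le
            · exact mul_le_of_le_one_right hg.1 (sub_le_self _ hg.1)
        _ ≤ g ω / δ := div_le_div_of_nonneg_left hg.1 hδ hω
  rw [integral_div] at hipw
  linarith [show (1 + 1 / δ) * ∫ ω, g ω ∂μ = (∫ ω, g ω ∂μ) / δ + ∫ ω, g ω ∂μ by ring]

end InverseProbabilityWeighting

theorem integral_sq_ipw_increment_le [StandardBorelSpace Ω] [IsProbabilityMeasure μ]
    (hm : m ≤ mΩ) {T Y1 Y0 Y p : Ω → ℝ} (hT : Measurable T) (hY1 : Measurable Y1)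
    (hT01 : ∀ ω, T ω = 0 ∨ T ω = 1) (hY : ∀ ω, Y ω = T ω * Y1 ω + (1 - T ω) * Y0 ω)
    (hp : p =ᵐ[μ] μ[T|m]) {δ : ℝ} (hδ : 0 < δ) (hpδ : ∀ᵐ ω ∂μ, δ ≤ p ω)
    (hindep : CondIndepFun m hm (fun ω => (Y1 ω, Y0 ω)) T μ)
    {F1 : ℝ → ℝ} (hF1 : ∀ y, F1 y = (μ {ω | Y1 ω ≤ y}).toReal) {G1 : ℝ → Ω → ℝ}
    (hG1 : ∀ y, G1 y =ᵐ[μ] μ[fun ω => if Y1 ω ≤ y then (1 : ℝ) else 0|m]) {Z1 : ℝ → Ω → ℝ}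
    (hZ1 : ∀ y ω, Z1 y ω = (T ω / p ω) * (if Y ω ≤ y then (1 : ℝ) else 0) - F1 y
      - (G1 y ω / p ω) * (T ω - p ω))
    {y t : ℝ} (hyt : y ≤ t) :
    ∫ ω, (Z1 t ω - Z1 y ω) ^ 2 ∂μ ≤ (1 + 1 / δ) * (F1 t - F1 y) := by
  have hite : ∀ s, (fun ω => if Y1 ω ≤ s then (1 : ℝ) else 0) = {ω | Y1 ω ≤ s}.indicator 1 :=
    fun s => funext fun ω => by simp [Set.indicator_apply]
  have hIs : ∀ s, MeasurableSet {ω | Y1 ω ≤ s} := fun s => measurableSet_le hY1 measurable_const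
  have hIint : ∀ s, Integrable ({ω | Y1 ω ≤ s}.indicator (1 : Ω → ℝ)) μ :=
    fun s => (integrable_const 1).indicator (hIs s)
  set J : Ω → ℝ := (Y1 ⁻¹' Set.Ioc y t).indicator 1
  have hJ : J = _ := (indicator_setOf_le_sub_indicator_setOf_le hyt).symm
  have hTJ : μ[T * J|m] =ᵐ[μ] μ[T|m] * μ[J|m] :=
    condExp_mul_indicator_of_condIndepFun hm hY1 hT hT01
      (hindep.comp measurable_fst measurable_id) measurableSet_Ioc
  have ha : ∫ ω, J ω ∂μ = F1 t - F1 y := by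
    rw [hJ, integral_sub' (hIint t) (hIint y), integral_indicator_one (hIs t),
      integral_indicator_one (hIs y), hF1, hF1]
    rfl
  have hg : μ[J|m] =ᵐ[μ] G1 t - G1 y := by
    rw [hJ]
    filter_upwards [condExp_sub (m := m) (hIint t) (hIint y), hG1 t, hG1 y] with ω h ht hy
    rw [h, Pi.sub_apply, Pi.sub_apply, ht, hy, hite, hite]
  have hZ : ∀ᵐ ω ∂μ, Z1 t ω - Z1 y ω =
      T ω * (J ω - μ[J|m] ω) / μ[T|m] ω + (μ[J|m] ω - ∫ ω', J ω' ∂μ) := by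
    filter_upwards [hp, hpδ, hg] with ω hpω hδω hgω
    have : p ω ≠ 0 := (hδ.trans_le hδω).ne'
    rw [hZ1, hZ1, ha, hgω, ← hpω, hJ]
    rcases hT01 ω with h | h
    · simp only [h, Pi.sub_apply, zero_div, zero_mul]
      field_simp
      ring
    · have hYω : Y ω = Y1 ω := by rw [hY, h]; ring
      simp only [h, hYω, Pi.sub_apply, ← congrFun (hite _)]
      field_simp
      ring
  calc ∫ ω, (Z1 t ω - Z1 y ω) ^ 2 ∂μ
      = ∫ ω, (T ω * (J ω - μ[J|m] ω) / μ[T|m] ω + (μ[J|m] ω - ∫ ω', J ω' ∂μ)) ^ 2 ∂μ :=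
        integral_congr_ae (hZ.mono fun ω h => congrArg (· ^ 2) h)
    _ ≤ (1 + 1 / δ) * ∫ ω, J ω ∂μ :=
        integral_sq_ipw_le hm hT (measurable_one.indicator (hY1 measurableSet_Ioc)) hT01
          (fun ω => Set.indicator_eq_zero_or_self _ _ _) hTJ
          (by filter_upwards [hpδ, hp] with ω h h' using h' ▸ h) hδ
    _ = (1 + 1 / δ) * (F1 t - F1 y) := by rw [ha]

end

theorem stmt_14_general
    {Ω : Type*} [MeasurableSpace Ω] [StandardBorelSpace Ω]
    {𝒳 : Type*} [MeasurableSpace 𝒳]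
    (μ : Measure Ω) [IsProbabilityMeasure μ]
    (X : Ω → 𝒳) (T : Ω → ℝ) (Y1 Y0 : Ω → ℝ)
    (hX : Measurable X) (hT : Measurable T) (hY1 : Measurable Y1)
    (hT01 : ∀ ω, T ω = 0 ∨ T ω = 1)
    (Y : Ω → ℝ) (hY : ∀ ω, Y ω = T ω * Y1 ω + (1 - T ω) * Y0 ω)
    (p : Ω → ℝ)
    (hp : p =ᵐ[μ] μ[T | MeasurableSpace.comap X inferInstance])
    (δ : ℝ) (hδ : δ ∈ Set.Ioo (0 : ℝ) (1/2))
    (hpδ : ∀ᵐ ω ∂μ, δ ≤ p ω ∧ p ω ≤ 1 - δ)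
    (hindep : CondIndepFun (MeasurableSpace.comap X inferInstance) hX.comap_le
      (fun ω => (Y1 ω, Y0 ω)) T μ)
    (F1 : ℝ → ℝ) (hF1 : ∀ y, F1 y = (μ {ω | Y1 ω ≤ y}).toReal)
    (G1 : ℝ → Ω → ℝ)
    (hG1 : ∀ y, G1 y =ᵐ[μ]
      μ[fun ω => if Y1 ω ≤ y then (1 : ℝ) else 0 | MeasurableSpace.comap X inferInstance])
    (Z1 : ℝ → Ω → ℝ)
    (hZ1 : ∀ y ω, Z1 y ω = (T ω / p ω) * (if Y ω ≤ y then (1 : ℝ) else 0) - F1 y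
      - (G1 y ω / p ω) * (T ω - p ω))
    (y t : ℝ) (hyt : y ≤ t) :
    ∫ ω, (Z1 t ω - Z1 y ω) ^ 2 ∂μ ≤ (1 + 1/δ) * (F1 t - F1 y) :=
  integral_sq_ipw_increment_le hX.comap_le hT hY1 hT01 hY hp hδ.1 (hpδ.mono fun _ h => h.1)
    hindep hF1 hG1 hZ1 hyt

/-- Moment bound underlying asymptotic equicontinuity: for all real `y ≤ t`,
`E[(Z₁(t) − Z₁(y))²] ≤ (1 + 1/δ)·(F₁(t) − F₁(y))`. -/
theorem stmt_14
    {Ω : Type*} [MeasurableSpace Ω] [StandardBorelSpace Ω]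
    {𝒳 : Type*} [MeasurableSpace 𝒳] [StandardBorelSpace 𝒳]
    (μ : Measure Ω) [IsProbabilityMeasure μ]
    (X : Ω → 𝒳) (T : Ω → ℝ) (Y1 Y0 : Ω → ℝ)
    (hX : Measurable X) (hT : Measurable T) (hY1 : Measurable Y1) (hY0 : Measurable Y0)
    (hT01 : ∀ ω, T ω = 0 ∨ T ω = 1)
    (Y : Ω → ℝ) (hY : ∀ ω, Y ω = T ω * Y1 ω + (1 - T ω) * Y0 ω)
    (p : Ω → ℝ)
    (hp : p =ᵐ[μ] μ[T | MeasurableSpace.comap X inferInstance])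
    (δ : ℝ) (hδ : δ ∈ Set.Ioo (0 : ℝ) (1/2))
    (hpδ : ∀ᵐ ω ∂μ, δ ≤ p ω ∧ p ω ≤ 1 - δ)
    (hindep : CondIndepFun (MeasurableSpace.comap X inferInstance) hX.comap_le
      (fun ω => (Y1 ω, Y0 ω)) T μ)
    (F1 : ℝ → ℝ) (hF1 : ∀ y, F1 y = (μ {ω | Y1 ω ≤ y}).toReal)
    (G1 : ℝ → Ω → ℝ)
    (hG1 : ∀ y, G1 y =ᵐ[μ]
      μ[fun ω => if Y1 ω ≤ y then (1 : ℝ) else 0 | MeasurableSpace.comap X inferInstance])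
    (Z1 : ℝ → Ω → ℝ)
    (hZ1 : ∀ y ω, Z1 y ω = (T ω / p ω) * (if Y ω ≤ y then (1 : ℝ) else 0) - F1 y
      - (G1 y ω / p ω) * (T ω - p ω))
    (y t : ℝ) (hyt : y ≤ t) :
    ∫ ω, (Z1 t ω - Z1 y ω) ^ 2 ∂μ ≤ (1 + 1/δ) * (F1 t - F1 y) :=
  stmt_14_general μ X T Y1 Y0 hX hT hY1 hT01 Y hY p hp δ hδ hpδ hindep F1 hF1 G1 hG1 Z1 hZ1 y t hyt
end

section
/- If F₀, F₁ are continuous cumulative distribution functions on ℝ and G₀, G₁ are arbitrary cumulative distribution functions on ℝ, then ∫_ℝ G₀ dμ_{G₁} − ∫_ℝ F₀ dμ_{F₁} = ∫_ℝ (G₀ − F₀) dμ_{G₁} − ∫_ℝ (G₁ − F₁) dμ_{F₀} (the decomposition of the plug-in Wilcoxon functional used in the proof of the asymptotic normality of the Wilcoxon-type statistic). -/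
/-!
For cdfs `F`, `G`, Tonelli gives `∫ F dμ_G = (μ_F ⊗ μ_G) {x ≤ y}` and `∫ G dμ_F = (μ_F ⊗ μ_G) {y ≤ x}`.
If `μ_F` has no atoms, the first set may be replaced by `{x < y}`, so the two cross integrals add up
to `1`. Expanding the right-hand side, the claim reads
`∫ F₀ dμ_{G₁} + ∫ G₁ dμ_{F₀} = ∫ F₀ dμ_{F₁} + ∫ F₁ dμ_{F₀}`, and both sides equal `1`.
-/

open MeasureTheory Filter Set Topology

theorem monotone_measure_Iic {α : Type*} [Preorder α] [MeasurableSpace α] (μ : Measure α) :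
    Monotone fun y => μ (Iic y) :=
  fun _ _ hxy => measure_mono (Iic_subset_Iic.2 hxy)

section CrossIntegrals

variable {α : Type*} [LinearOrder α] [TopologicalSpace α] [OrderClosedTopology α]
  [SecondCountableTopology α] [MeasurableSpace α] [BorelSpace α]

theorem lintegral_measure_Iic_add_lintegral_measure_Iic (μ ν : Measure α) [SFinite μ] [SFinite ν]
    [NullSingletonClass μ] :
    ∫⁻ y, μ (Iic y) ∂ν + ∫⁻ x, ν (Iic x) ∂μ = μ univ * ν univ := by
  have hlt : MeasurableSet {p : α × α | p.1 < p.2} := measurableSet_lt measurable_fst measurable_snd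
  have hle : MeasurableSet {p : α × α | p.2 ≤ p.1} := measurableSet_le measurable_snd measurable_fst
  have hIio : ∫⁻ y, μ (Iic y) ∂ν = μ.prod ν {p | p.1 < p.2} := by
    rw [Measure.prod_apply_symm hlt]
    exact lintegral_congr fun y => (measure_congr Iio_ae_eq_Iic).symm
  have hIic : ∫⁻ x, ν (Iic x) ∂μ = μ.prod ν {p | p.2 ≤ p.1} := Measure.prod_apply hle |>.symm
  have hunion : {p : α × α | p.1 < p.2} ∪ {p | p.2 ≤ p.1} = univ := by
    ext p
    simp [lt_or_ge]
  have hdisj : Disjoint {p : α × α | p.1 < p.2} {p | p.2 ≤ p.1} :=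
    disjoint_left.2 fun _ h₁ h₂ => not_le.2 h₁ h₂
  rw [hIio, hIic, ← measure_union hdisj hle, hunion, ← univ_prod_univ, Measure.prod_prod]

theorem integral_measureReal_Iic_add_integral_measureReal_Iic (μ ν : Measure α)
    [IsProbabilityMeasure μ] [IsProbabilityMeasure ν] [NullSingletonClass μ] :
    ∫ y, μ.real (Iic y) ∂ν + ∫ x, ν.real (Iic x) ∂μ = 1 := by
  have hsum := lintegral_measure_Iic_add_lintegral_measure_Iic μ ν
  rw [measure_univ, measure_univ, one_mul] at hsum
  obtain ⟨hμ, hν⟩ := ENNReal.add_ne_top.1 (hsum ▸ ENNReal.one_ne_top)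
  simp only [measureReal_def]
  rw [integral_toReal (monotone_measure_Iic μ).measurable.aemeasurable
      (ae_of_all _ fun _ => measure_lt_top _ _),
    integral_toReal (monotone_measure_Iic ν).measurable.aemeasurable
      (ae_of_all _ fun _ => measure_lt_top _ _),
    ← ENNReal.toReal_add hμ hν, hsum, ENNReal.toReal_one]

end CrossIntegrals

namespace StieltjesFunction

variable (F G : StieltjesFunction ℝ)

theorem nullSingletonClass_measure (hF : Continuous F) : NullSingletonClass F.measure :=
  ⟨fun y => by
    rw [F.measure_singleton, hF.continuousWithinAt.leftLim_eq, sub_self, ENNReal.ofReal_zero]⟩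

theorem measureReal_Iic {y : ℝ} (hF : Tendsto F atBot (𝓝 0)) : F.measure.real (Iic y) = F y := by
  rw [measureReal_def, F.measure_Iic hF, sub_zero,
    ENNReal.toReal_ofReal (F.mono.le_of_tendsto hF y)]

theorem integrable_of_tendsto {a b : ℝ} (ha : Tendsto F atBot (𝓝 a)) (hb : Tendsto F atTop (𝓝 b))
    (μ : Measure ℝ) [IsFiniteMeasure μ] : Integrable F μ :=
  .of_bound F.mono.measurable.aestronglyMeasurable (max |a| |b|) <| ae_of_all _ fun y =>
    abs_le_max_abs_abs (F.mono.le_of_tendsto ha y) (F.mono.ge_of_tendsto hb y)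

theorem integral_add_integral_eq_one (hF : Continuous F)
    (hFbot : Tendsto F atBot (𝓝 0)) (hFtop : Tendsto F atTop (𝓝 1))
    (hGbot : Tendsto G atBot (𝓝 0)) (hGtop : Tendsto G atTop (𝓝 1)) :
    ∫ y, F y ∂G.measure + ∫ x, G x ∂F.measure = 1 := by
  have := F.isProbabilityMeasure hFbot hFtop
  have := G.isProbabilityMeasure hGbot hGtop
  have := F.nullSingletonClass_measure hF
  simpa only [F.measureReal_Iic hFbot, G.measureReal_Iic hGbot] using
    integral_measureReal_Iic_add_integral_measureReal_Iic F.measure G.measure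

end StieltjesFunction

theorem stmt_16_general
    (F0 F1 G0 G1 : StieltjesFunction ℝ)
    (hF0cont : Continuous F0)
    (hF0bot : Tendsto F0 atBot (nhds 0)) (hF0top : Tendsto F0 atTop (nhds 1))
    (hF1bot : Tendsto F1 atBot (nhds 0)) (hF1top : Tendsto F1 atTop (nhds 1))
    (hG0bot : Tendsto G0 atBot (nhds 0)) (hG0top : Tendsto G0 atTop (nhds 1))
    (hG1bot : Tendsto G1 atBot (nhds 0)) (hG1top : Tendsto G1 atTop (nhds 1)) :
    (∫ y, G0 y ∂G1.measure) - (∫ y, F0 y ∂F1.measure) =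
      (∫ y, (G0 y - F0 y) ∂G1.measure) - ∫ y, (G1 y - F1 y) ∂F0.measure := by
  have := F0.isProbabilityMeasure hF0bot hF0top
  have := G1.isProbabilityMeasure hG1bot hG1top
  rw [integral_sub (G0.integrable_of_tendsto hG0bot hG0top _)
      (F0.integrable_of_tendsto hF0bot hF0top _),
    integral_sub (G1.integrable_of_tendsto hG1bot hG1top _)
      (F1.integrable_of_tendsto hF1bot hF1top _)]
  linarith [F0.integral_add_integral_eq_one G1 hF0cont hF0bot hF0top hG1bot hG1top,
    F0.integral_add_integral_eq_one F1 hF0cont hF0bot hF0top hF1bot hF1top]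

/-- Decomposition of the plug-in Wilcoxon functional: if `F₀, F₁` are continuous
cdfs and `G₀, G₁` are arbitrary cdfs, then
`∫ G₀ dμ_{G₁} − ∫ F₀ dμ_{F₁} = ∫ (G₀ − F₀) dμ_{G₁} − ∫ (G₁ − F₁) dμ_{F₀}`. -/
theorem stmt_16
    (F0 F1 G0 G1 : StieltjesFunction ℝ)
    (hF0cont : Continuous F0) (hF1cont : Continuous F1)
    (hF0bot : Tendsto F0 atBot (nhds 0)) (hF0top : Tendsto F0 atTop (nhds 1))
    (hF1bot : Tendsto F1 atBot (nhds 0)) (hF1top : Tendsto F1 atTop (nhds 1))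
    (hG0bot : Tendsto G0 atBot (nhds 0)) (hG0top : Tendsto G0 atTop (nhds 1))
    (hG1bot : Tendsto G1 atBot (nhds 0)) (hG1top : Tendsto G1 atTop (nhds 1)) :
    (∫ y, G0 y ∂G1.measure) - (∫ y, F0 y ∂F1.measure) =
      (∫ y, (G0 y - F0 y) ∂G1.measure) - ∫ y, (G1 y - F1 y) ∂F0.measure :=
  stmt_16_general F0 F1 G0 G1 hF0cont hF0bot hF0top hF1bot hF1top hG0bot hG0top hG1bot hG1top
end
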